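/- arXiv:2309.06146 — 10 statements merged into one kernel-verified Lean document; each statement's English description precedes it below -/
import Mathlib

section
/- The space c₀ of real sequences converging to zero is not a Banach space of almost universal disposition: there exists ε > 0 such that for the isometry T : ℝ → c₀, T(r) = (r,0,0,…), and the isometry S : ℝ → ℓ∞², S(r) = (r,r), no linear (1+ε)-isometry T̂ : ℓ∞² → c₀ satisfies T̂ ∘ S = T. -/
/-- Pointwise bound for the sup norm on `C₀(ℕ, ℝ)`. -/
lemma c0_abs_apply_le_norm (f : ZeroAtInftyContinuousMap ℕ ℝ) (n : ℕ) :
    |f n| ≤ ‖f‖ := by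
  rw [← ZeroAtInftyContinuousMap.norm_toBCF_eq_norm]
  exact f.toBCF.norm_coe_le_norm n

lemma c0_norm_le (f : ZeroAtInftyContinuousMap ℕ ℝ) {C : ℝ} (hC : 0 ≤ C)
    (h : ∀ n, |f n| ≤ C) : ‖f‖ ≤ C := by
  rw [← ZeroAtInftyContinuousMap.norm_toBCF_eq_norm]
  exact (BoundedContinuousFunction.norm_le hC).mpr h

lemma pi_norm_pair (a b : ℝ) : ‖(![a, b] : Fin 2 → ℝ)‖ = max |a| |b| := by
  apply le_antisymm
  · apply pi_norm_le_iff_of_nonneg (le_max_of_le_left (abs_nonneg a)) |>.mpr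
    intro i
    fin_cases i
    · simpa using le_max_left |a| |b|
    · simpa using le_max_right |a| |b|
  · apply max_le
    · simpa using norm_le_pi_norm (![a, b] : Fin 2 → ℝ) 0
    · simpa using norm_le_pi_norm (![a, b] : Fin 2 → ℝ) 1

/-- c₀ is not of almost universal disposition, witnessed by
`T : ℝ → c₀`, `T r = (r,0,0,…)` and `S : ℝ → ℓ∞²`, `S r = (r,r)`. -/
theorem c0_not_almost_universal_disposition :
    ∃ ε : ℝ, 0 < ε ∧
      ¬ ∃ That : (Fin 2 → ℝ) →ₗ[ℝ] ZeroAtInftyContinuousMap ℕ ℝ,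
        (∀ r : ℝ, ∀ n : ℕ, That (fun _ => r) n = if n = 0 then r else 0) ∧
        (∀ y : Fin 2 → ℝ,
          (1 + ε)⁻¹ * ‖y‖ ≤ ‖That y‖ ∧ ‖That y‖ ≤ (1 + ε) * ‖y‖) := by
  refine ⟨1/5, by norm_num, ?_⟩
  rintro ⟨That, hS, hiso⟩
  set u : ZeroAtInftyContinuousMap ℕ ℝ := That ![1, -1] with hu_def
  -- ‖u‖ ≤ 6/5
  have hnv : ‖(![1, -1] : Fin 2 → ℝ)‖ = 1 := by
    rw [pi_norm_pair]; norm_num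
  have hu : ‖u‖ ≤ 6/5 := by
    have := (hiso ![1, -1]).2
    rw [hnv] at this
    linarith
  have hun : ∀ n, |u n| ≤ 6/5 := fun n => le_trans (c0_abs_apply_le_norm u n) hu
  -- the constant-1 vector
  set c : Fin 2 → ℝ := fun _ => 1 with hc_def
  have hTc : ∀ n : ℕ, (That c) n = if n = 0 then 1 else 0 := hS 1
  -- decompositions
  have hdec1 : (![1, 0] : Fin 2 → ℝ) = (1/2 : ℝ) • c + (1/2 : ℝ) • ![1, -1] := by
    funext i; fin_cases i <;> simp [hc_def] <;> norm_num
  have hdec2 : (![0, 1] : Fin 2 → ℝ) = (1/2 : ℝ) • c - (1/2 : ℝ) • ![1, -1] := by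
    funext i; fin_cases i <;> simp [hc_def] <;> norm_num
  have hT1 : ∀ n : ℕ, (That ![1, 0]) n
      = (1/2) * (if n = 0 then 1 else 0) + (1/2) * u n := by
    intro n
    rw [hdec1, map_add, map_smul, map_smul]
    simp [hTc n, hu_def]
  have hT2 : ∀ n : ℕ, (That ![0, 1]) n
      = (1/2) * (if n = 0 then 1 else 0) - (1/2) * u n := by
    intro n
    rw [hdec2, map_sub, map_smul, map_smul]
    simp [hTc n, hu_def]
  -- lower bounds of norms
  have hnorm1 : (5:ℝ)/6 ≤ ‖That ![1, 0]‖ := by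
    have := (hiso ![1, 0]).1
    rw [pi_norm_pair] at this
    norm_num at this ⊢
    linarith
  have hnorm2 : (5:ℝ)/6 ≤ ‖That ![0, 1]‖ := by
    have := (hiso ![0, 1]).1
    rw [pi_norm_pair] at this
    norm_num at this ⊢
    linarith
  -- upper bounds: all coordinates except 0 are small
  have key : ∀ (f : ZeroAtInftyContinuousMap ℕ ℝ), (5:ℝ)/6 ≤ ‖f‖ →
      (∀ n, n ≠ 0 → |f n| ≤ 3/5) → (5:ℝ)/6 ≤ |f 0| := by
    intro f hf htail
    by_contra h
    push_neg at h
    have : ‖f‖ ≤ max |f 0| (3/5) := by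
      apply c0_norm_le f (le_max_of_le_right (by norm_num))
      intro n
      rcases eq_or_ne n 0 with rfl | hn
      · exact le_max_left _ _
      · exact le_max_of_le_right (htail n hn)
    rcases max_cases |f 0| (3/5 : ℝ) with ⟨he, _⟩ | ⟨he, _⟩ <;> rw [he] at this <;> linarith
  have h1 : (5:ℝ)/6 ≤ |(1:ℝ)/2 + 1/2 * u 0| := by
    have := key (That ![1, 0]) hnorm1 ?_
    · rw [hT1 0] at this; simpa using this
    · intro n hn
      rw [hT1 n, if_neg hn]
      have := hun n
      rw [abs_le] at this ⊢
      constructor <;> linarith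
  have h2 : (5:ℝ)/6 ≤ |(1:ℝ)/2 - 1/2 * u 0| := by
    have := key (That ![0, 1]) hnorm2 ?_
    · rw [hT2 0] at this; simpa using this
    · intro n hn
      rw [hT2 n, if_neg hn]
      have := hun n
      rw [abs_le] at this ⊢
      constructor <;> linarith
  have h0 := hun 0
  rw [abs_le] at h0
  rcases abs_cases ((1:ℝ)/2 + 1/2 * u 0) with ⟨e1, _⟩ | ⟨e1, _⟩ <;>
    rcases abs_cases ((1:ℝ)/2 - 1/2 * u 0) with ⟨e2, _⟩ | ⟨e2, _⟩ <;>
      rw [e1] at h1 <;> rw [e2] at h2 <;> linarith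
end

section
/- Let ψ : ℓ∞^n → ℓ∞^{n+1} be a linear isometry, let e_1,…,e_n be the standard unit vector basis of ℓ∞^n, and set f_j = ψ(e_j). If for some coordinate i one has |f_j(i)| = 1, then f_k(i) = 0 for all k ≠ j. -/
/-- if ψ : ℓ∞^n → ℓ∞^{n+1} is a linear isometry and the image of
the j-th basis vector has a coordinate of modulus 1, then the images of all
other basis vectors vanish at that coordinate. -/
theorem linfty_isometry_basis_disjoint_support
    (n : ℕ) (ψ : (Fin n → ℝ) →ₗ[ℝ] (Fin (n + 1) → ℝ))
    (hψ : ∀ x, ‖ψ x‖ = ‖x‖)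
    (j : Fin n) (i : Fin (n + 1)) (h : |ψ (Pi.single j 1) i| = 1) :
    ∀ k : Fin n, k ≠ j → ψ (Pi.single k 1) i = 0 := by
  intro k hk
  have hle : ∀ c : Fin n → ℝ, ‖c‖ ≤ 1 → |ψ c i| ≤ 1 := by
    intro c hc
    have h1 : ‖ψ c i‖ ≤ ‖ψ c‖ := norm_le_pi_norm (ψ c) i
    rw [hψ] at h1
    exact (Real.norm_eq_abs _ ▸ h1).trans hc
  set a := ψ (Pi.single j 1) i with ha
  set b := ψ (Pi.single k 1) i with hb
  have hnorm : ∀ s : ℝ, |s| ≤ 1 →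
      ‖((Pi.single j 1 : Fin n → ℝ) + s • (Pi.single k 1 : Fin n → ℝ))‖ ≤ 1 := by
    intro s hs
    rw [pi_norm_le_iff_of_nonneg zero_le_one]
    intro m
    simp only [Pi.add_apply, Pi.smul_apply, Pi.single_apply, smul_eq_mul,
      Real.norm_eq_abs]
    split_ifs <;> simp_all
  have h1 : |a + b| ≤ 1 := by
    have := hle _ (hnorm 1 (by norm_num))
    simpa [ha, hb] using this
  have h2 : |a - b| ≤ 1 := by
    have := hle _ (hnorm (-1) (by norm_num))
    simpa [ha, hb, sub_eq_add_neg] using this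
  rcases abs_le.mp h1 with ⟨h1a, h1b⟩
  rcases abs_le.mp h2 with ⟨h2a, h2b⟩
  rcases (abs_eq zero_le_one).mp h with hA | hA <;> linarith
end

section
/- Let ψ : ℓ∞^n → ℓ∞^{n+1} be a linear isometry. Then there exist a signed-permutation basis g_1,…,g_{n+1} of ℓ∞^{n+1} (i.e., the image of the standard basis under a linear isometric automorphism of ℓ∞^{n+1}) and real numbers a_1,…,a_n with ∑_{j=1}^n |a_j| ≤ 1 such that ψ(e_j) = g_j + a_j g_{n+1} for j = 1,…,n, where e_1,…,e_n is the standard basis of ℓ∞^n. -/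
/-- Lazar–Lindenstrauss: any linear isometry ψ : ℓ∞^n → ℓ∞^{n+1}
is, with respect to a suitable admissible basis g₁,…,g_{n+1} of ℓ∞^{n+1}
(the image of the standard basis under an isometric automorphism φ),
of the form ψ(e_j) = g_j + a_j g_{n+1} with ∑_j |a_j| ≤ 1. -/
theorem linfty_isometry_representation
    (n : ℕ) (ψ : (Fin n → ℝ) →ₗ[ℝ] (Fin (n + 1) → ℝ))
    (hψ : ∀ x, ‖ψ x‖ = ‖x‖) :
    ∃ (φ : (Fin (n + 1) → ℝ) ≃ₗᵢ[ℝ] (Fin (n + 1) → ℝ)) (a : Fin n → ℝ),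
      (∑ j : Fin n, |a j|) ≤ 1 ∧
      ∀ j : Fin n,
        ψ (Pi.single j 1) =
          φ (Pi.single j.castSucc 1) + a j • φ (Pi.single (Fin.last n) 1) := by
  classical
  set M : Fin (n+1) → Fin n → ℝ := fun i j => ψ (Pi.single j 1) i with hM
  -- expansion of ψ through the matrix M
  have key : ∀ (x : Fin n → ℝ) (i : Fin (n+1)), ψ x i = ∑ j, x j * M i j := by
    intro x i
    have hx : ψ x = ∑ j, x j • ψ (Pi.single j 1) := by
      conv_lhs => rw [← Finset.univ_sum_single x, map_sum]
      refine Finset.sum_congr rfl fun j _ => ?_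
      rw [← map_smul]
      congr 1
      ext k
      simp [Pi.single_apply]
    rw [hx]
    simp [Finset.sum_apply, hM, smul_eq_mul]
  -- every row of M has ℓ¹-norm at most 1
  have row : ∀ i, (∑ j, |M i j|) ≤ 1 := by
    intro i
    set ε : Fin n → ℝ := fun j => if M i j < 0 then -1 else 1 with hε
    have hεnorm : ‖ε‖ ≤ 1 := by
      rw [pi_norm_le_iff_of_nonneg zero_le_one]
      intro j
      by_cases h : M i j < 0 <;> simp [hε, Real.norm_eq_abs, h]
    have hval : ψ ε i = ∑ j, |M i j| := by
      rw [key]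
      refine Finset.sum_congr rfl fun j _ => ?_
      rw [hε]
      rcases lt_or_ge (M i j) 0 with h | h
      · simp [h, abs_of_neg h]
      · simp [not_lt.2 h, abs_of_nonneg h]
    calc (∑ j, |M i j|) = ψ ε i := hval.symm
      _ ≤ |ψ ε i| := le_abs_self _
      _ ≤ ‖ψ ε‖ := by rw [← Real.norm_eq_abs]; exact norm_le_pi_norm _ i
      _ = ‖ε‖ := hψ ε
      _ ≤ 1 := hεnorm
  -- each column has an entry of absolute value 1
  have peak : ∀ j : Fin n, ∃ i, |M i j| = 1 := by
    intro j
    have h1 : ‖ψ (Pi.single j 1)‖ = 1 := by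
      rw [hψ, Pi.norm_single, norm_one]
    obtain ⟨i, hi⟩ := Finite.exists_max fun i => |M i j|
    refine ⟨i, le_antisymm ?_ ?_⟩
    · calc |M i j| ≤ ‖ψ (Pi.single j 1)‖ := by
            rw [← Real.norm_eq_abs]; exact norm_le_pi_norm _ i
        _ = 1 := h1
    · rw [← h1]
      rw [pi_norm_le_iff_of_nonneg (abs_nonneg _)]
      intro i'
      rw [Real.norm_eq_abs]
      exact hi i'
  choose p hp using peak
  -- peak rows vanish off the peak column
  have off : ∀ (j k : Fin n), k ≠ j → M (p j) k = 0 := by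
    intro j k hkj
    have h1 : |M (p j) k| ≤ ∑ x ∈ Finset.univ.erase j, |M (p j) x| :=
      Finset.single_le_sum (f := fun x => |M (p j) x|) (fun i _ => abs_nonneg _)
        (Finset.mem_erase.2 ⟨hkj, Finset.mem_univ k⟩)
    have h2 : (∑ x ∈ Finset.univ.erase j, |M (p j) x|) + |M (p j) j| = ∑ x, |M (p j) x| :=
      Finset.sum_erase_add _ _ (Finset.mem_univ j)
    have h3 := row (p j)
    rw [← h2, hp j] at h3
    have h4 : |M (p j) k| ≤ 0 := by linarith
    exact abs_eq_zero.1 (le_antisymm h4 (abs_nonneg _))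
  have pinj : Function.Injective p := by
    intro j j' h
    by_contra hne
    have h0 := off j' j (fun hc => hne hc)
    rw [← h] at h0
    have h1 := hp j
    rw [h0] at h1
    simp at h1
  -- the missing row index r
  have hnots : ¬ Function.Surjective p := by
    intro hs
    have := Fintype.card_le_of_surjective p hs
    simp [Fintype.card_fin] at this
  obtain ⟨r, hr⟩ := not_forall.1 hnots
  push_neg at hr
  -- the permutation q
  set q : Fin (n+1) → Fin (n+1) := Fin.lastCases r p with hq
  have hqc : ∀ j : Fin n, q j.castSucc = p j := fun j => Fin.lastCases_castSucc ..
  have hql : q (Fin.last n) = r := Fin.lastCases_last ..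
  have qinj : Function.Injective q := by
    intro i i' h
    rcases Fin.eq_castSucc_or_eq_last i with ⟨j, rfl⟩ | rfl <;>
      rcases Fin.eq_castSucc_or_eq_last i' with ⟨j', rfl⟩ | rfl
    · rw [hqc, hqc] at h
      rw [pinj h]
    · rw [hqc, hql] at h
      exact absurd h (hr j)
    · rw [hqc, hql] at h
      exact absurd h.symm (hr j')
    · rfl
  set π : Fin (n+1) ≃ Fin (n+1) :=
    Equiv.ofBijective q (Finite.injective_iff_bijective.1 qinj) with hπ
  have hπc : ∀ j : Fin n, π j.castSucc = p j := hqc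
  have hπl : π (Fin.last n) = r := hql
  -- signs
  set t : Fin (n+1) → ℝ := Fin.lastCases 1 (fun j => M (p j) j) with ht
  have htc : ∀ j : Fin n, t j.castSucc = M (p j) j := fun j => Fin.lastCases_castSucc ..
  have htl : t (Fin.last n) = 1 := Fin.lastCases_last ..
  have habs : ∀ i, |t i| = 1 := by
    intro i
    rcases Fin.eq_castSucc_or_eq_last i with ⟨j, rfl⟩ | rfl
    · rw [htc]; exact hp j
    · rw [htl]; simp
  have htt : ∀ i, t i * t i = 1 := by
    intro i
    rcases (abs_eq zero_le_one).1 (habs i) with h | h <;> rw [h] <;> norm_num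
  -- the signed-permutation linear equivalence
  let φL : (Fin (n+1) → ℝ) ≃ₗ[ℝ] (Fin (n+1) → ℝ) :=
    { toFun := fun x i => t (π.symm i) * x (π.symm i)
      map_add' := fun x y => by ext i; simp [mul_add]
      map_smul' := fun c x => by ext i; simp; ring
      invFun := fun y j => t j * y (π j)
      left_inv := fun x => by
        ext j
        simp only [Equiv.symm_apply_apply]
        rw [← mul_assoc, htt, one_mul]
      right_inv := fun y => by
        ext i
        simp only [Equiv.apply_symm_apply]
        rw [← mul_assoc, htt, one_mul] }
  have hφL : ∀ (x : Fin (n+1) → ℝ) (i : Fin (n+1)),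
      φL x i = t (π.symm i) * x (π.symm i) := fun _ _ => rfl
  have hnorm : ∀ x : Fin (n+1) → ℝ, ‖φL x‖ = ‖x‖ := by
    intro x
    refine le_antisymm ?_ ?_
    · rw [pi_norm_le_iff_of_nonneg (norm_nonneg x)]
      intro i
      rw [hφL, Real.norm_eq_abs, abs_mul, habs, one_mul, ← Real.norm_eq_abs]
      exact norm_le_pi_norm _ _
    · rw [pi_norm_le_iff_of_nonneg (norm_nonneg (φL x))]
      intro j
      have : φL x (π j) = t j * x j := by
        rw [hφL, Equiv.symm_apply_apply]
      calc ‖x j‖ = ‖φL x (π j)‖ := by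
            simp [this, Real.norm_eq_abs, abs_mul, habs]
        _ ≤ ‖φL x‖ := norm_le_pi_norm _ _
  refine ⟨⟨φL, hnorm⟩, fun j => M r j, row r, fun j => ?_⟩
  have happ : ∀ (v : Fin (n+1) → ℝ) (i : Fin (n+1)),
      (LinearIsometryEquiv.mk φL hnorm) v i = t (π.symm i) * v (π.symm i) := fun _ _ => rfl
  funext i
  have hi : ψ (Pi.single j 1) i = M i j := rfl
  rw [Pi.add_apply, Pi.smul_apply, happ, happ, hi, smul_eq_mul]
  obtain ⟨i', rfl⟩ := π.surjective i
  rw [Equiv.symm_apply_apply]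
  rcases Fin.eq_castSucc_or_eq_last i' with ⟨k, rfl⟩ | rfl
  · rw [hπc, htc]
    have hckl : k.castSucc ≠ Fin.last n := (Fin.castSucc_lt_last k).ne
    rw [Pi.single_eq_of_ne hckl]
    by_cases hkj : k = j
    · subst hkj
      rw [Pi.single_eq_same]
      ring
    · rw [Pi.single_eq_of_ne (fun hc => hkj (Fin.castSucc_injective n hc))]
      rw [off k j (fun hc => hkj hc.symm)]
      ring
  · rw [hπl, htl, Pi.single_eq_same,
      Pi.single_eq_of_ne (fun hc : Fin.last n = j.castSucc =>
        (Fin.castSucc_lt_last j).ne hc.symm)]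
    ring
end

section
/- Let X be the space c₀ with the norm ‖x‖_X = ‖x‖_∞ + (∑_{n≥1} |x_n|²/2ⁿ)^{1/2} and Y be c₀ with the norm ‖x‖_Y = ‖x‖_∞ + (∑_{n≥1} |x_{n+1}|²/2ⁿ)^{1/2}. Then X is strictly convex but Y is not strictly convex; in particular X and Y are not isometrically isomorphic. -/
open scoped NNReal

/-- The Pełczyński norm `‖x‖_X = ‖x‖_∞ + (∑_{n≥1} |x_n|²/2ⁿ)^{1/2}` on c₀
(0-indexed: the n-th coordinate, n ≥ 1, of the paper is `x (n-1)` here). -/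
noncomputable def pelczynskiNormX (x : ZeroAtInftyContinuousMap ℕ ℝ) : ℝ :=
  ‖x‖ + Real.sqrt (∑' k : ℕ, |x k| ^ 2 / 2 ^ (k + 1))

/-- The shifted Pełczyński norm `‖x‖_Y = ‖x‖_∞ + (∑_{n≥1} |x_{n+1}|²/2ⁿ)^{1/2}`. -/
noncomputable def pelczynskiNormY (x : ZeroAtInftyContinuousMap ℕ ℝ) : ℝ :=
  ‖x‖ + Real.sqrt (∑' k : ℕ, |x (k + 1)| ^ 2 / 2 ^ (k + 1))

open scoped ENNReal

namespace PelAux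

lemma coe_le_norm (f : ZeroAtInftyContinuousMap ℕ ℝ) (k : ℕ) : |f k| ≤ ‖f‖ := by
  rw [← ZeroAtInftyContinuousMap.norm_toBCF_eq_norm, ← Real.norm_eq_abs]
  exact (f.toBCF).norm_coe_le_norm k

noncomputable def pw (x : ZeroAtInftyContinuousMap ℕ ℝ) : ℕ → ℝ :=
  fun k => x k / Real.sqrt (2 ^ (k + 1))

lemma pw_norm_sq (x : ZeroAtInftyContinuousMap ℕ ℝ) (k : ℕ) :
    ‖pw x k‖ ^ 2 = |x k| ^ 2 / 2 ^ (k + 1) := by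
  have h : (0:ℝ) ≤ 2 ^ (k+1) := by positivity
  rw [pw, Real.norm_eq_abs, abs_div, div_pow, abs_of_nonneg (Real.sqrt_nonneg _),
    Real.sq_sqrt h, sq_abs]

lemma summable_q (x : ZeroAtInftyContinuousMap ℕ ℝ) :
    Summable (fun k : ℕ => |x k| ^ 2 / 2 ^ (k + 1)) := by
  have hg : Summable (fun k : ℕ => (‖x‖ ^ 2 / 2) * (1/2) ^ k) :=
    (summable_geometric_of_lt_one (by norm_num) (by norm_num)).mul_left _
  refine Summable.of_nonneg_of_le (fun k => by positivity) (fun k => ?_) hg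
  have h1 : |x k| ≤ ‖x‖ := coe_le_norm x k
  have h2 : (0:ℝ) ≤ |x k| := abs_nonneg _
  have hsq : |x k| ^ 2 ≤ ‖x‖ ^ 2 := by nlinarith
  have hpos : (0:ℝ) < 2 ^ (k+1) := by positivity
  have he : (‖x‖ ^ 2 / 2) * ((1:ℝ)/2) ^ k = ‖x‖ ^ 2 / 2 ^ (k+1) := by
    rw [div_pow, one_pow, pow_succ]
    ring
  rw [he]
  exact div_le_div_of_nonneg_right hsq hpos.le

lemma memlp (x : ZeroAtInftyContinuousMap ℕ ℝ) : Memℓp (pw x) 2 := by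
  apply memℓp_gen
  have h : (fun k : ℕ => ‖pw x k‖ ^ (2:ℝ≥0∞).toReal) = fun k => |x k| ^ 2 / 2 ^ (k+1) := by
    funext k
    rw [show ((2:ℝ≥0∞).toReal) = ((2:ℕ):ℝ) by norm_num, Real.rpow_natCast, pw_norm_sq]
  rw [h]
  exact summable_q x

noncomputable def T (x : ZeroAtInftyContinuousMap ℕ ℝ) : lp (fun _ : ℕ => ℝ) 2 :=
  ⟨pw x, memlp x⟩

lemma T_norm (x : ZeroAtInftyContinuousMap ℕ ℝ) :
    ‖T x‖ = Real.sqrt (∑' k : ℕ, |x k| ^ 2 / 2 ^ (k + 1)) := by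
  have hp : 0 < (2:ℝ≥0∞).toReal := by norm_num
  have h := lp.norm_rpow_eq_tsum hp (T x)
  have e2 : ((2:ℝ≥0∞).toReal) = ((2:ℕ):ℝ) := by norm_num
  simp_rw [e2, Real.rpow_natCast] at h
  have h2 : (∑' k : ℕ, ‖(T x : ∀ _ : ℕ, ℝ) k‖ ^ (2:ℕ)) = ∑' k : ℕ, |x k| ^ 2 / 2 ^ (k+1) :=
    tsum_congr fun k => pw_norm_sq x k
  rw [← h2, ← h, Real.sqrt_sq (norm_nonneg _)]

lemma normX_eq (x : ZeroAtInftyContinuousMap ℕ ℝ) :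
    pelczynskiNormX x = ‖x‖ + ‖T x‖ := by rw [pelczynskiNormX, T_norm]

lemma T_add (x y : ZeroAtInftyContinuousMap ℕ ℝ) : T (x + y) = T x + T y := by
  apply lp.ext
  funext k
  simp [T, pw, add_div]
  rfl

lemma T_smul (c : ℝ) (x : ZeroAtInftyContinuousMap ℕ ℝ) : T (c • x) = c • T x := by
  apply lp.ext
  funext k
  simp [T, pw, mul_div_assoc]

lemma T_inj {x y : ZeroAtInftyContinuousMap ℕ ℝ} (h : T x = T y) : x = y := by
  ext k
  have hh := congrFun (congrArg (Subtype.val) h) k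
  simp only [T, pw] at hh
  have hs : Real.sqrt (2 ^ (k+1)) ≠ 0 := by positivity
  field_simp at hh
  exact hh

lemma T_zero : T (0 : ZeroAtInftyContinuousMap ℕ ℝ) = 0 := by
  apply lp.ext; funext k; simp [T, pw]

lemma normX_smul (c : ℝ) (hc : 0 ≤ c) (x : ZeroAtInftyContinuousMap ℕ ℝ) :
    pelczynskiNormX (c • x) = c * pelczynskiNormX x := by
  have hn : ‖c • x‖ = ‖c‖ * ‖x‖ := norm_smul c x
  rw [normX_eq, normX_eq, T_smul, hn, norm_smul, Real.norm_eq_abs, abs_of_nonneg hc]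
  ring

lemma normX_nonneg (x : ZeroAtInftyContinuousMap ℕ ℝ) : 0 ≤ pelczynskiNormX x := by
  rw [normX_eq]; positivity

lemma strict_convex_X : ∀ x y : ZeroAtInftyContinuousMap ℕ ℝ,
    pelczynskiNormX x = 1 → pelczynskiNormX y = 1 → x ≠ y →
    pelczynskiNormX (x + y) < 2 := by
  intro x y hx hy hne
  have hx0 : x ≠ 0 := by
    rintro rfl
    rw [normX_eq] at hx; simp [T_zero] at hx
  have hy0 : y ≠ 0 := by
    rintro rfl
    rw [normX_eq] at hy; simp [T_zero] at hy
  by_contra hcon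
  push_neg at hcon
  rw [normX_eq, T_add] at hcon
  have h1 : ‖x + y‖ ≤ ‖x‖ + ‖y‖ := norm_add_le x y
  have h2 : ‖T x + T y‖ ≤ ‖T x‖ + ‖T y‖ := norm_add_le _ _
  rw [normX_eq] at hx hy
  have heq2 : ‖T x + T y‖ = ‖T x‖ + ‖T y‖ := by linarith
  have hray : SameRay ℝ (T x) (T y) := sameRay_iff_norm_add.mpr heq2
  have hTx0 : T x ≠ 0 := fun h => hx0 (T_inj (by rw [h, T_zero]))
  have hTy0 : T y ≠ 0 := fun h => hy0 (T_inj (by rw [h, T_zero]))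
  obtain ⟨r, s, hr, hs, hrs⟩ := hray.exists_pos hTx0 hTy0
  rw [← T_smul, ← T_smul] at hrs
  have hxy : r • x = s • y := T_inj hrs
  have h1' : pelczynskiNormX (r • x) = r := by
    rw [normX_smul r hr.le, normX_eq, hx, mul_one]
  have h2' : pelczynskiNormX (s • y) = s := by
    rw [normX_smul s hs.le, normX_eq, hy, mul_one]
  have : r = s := by rw [← h1', ← h2', hxy]
  subst this
  exact hne (smul_right_injective _ hr.ne' hxy)



noncomputable def zf (c d : ℝ) : ZeroAtInftyContinuousMap ℕ ℝ where
  toFun := fun k => if k = 0 then c else if k = 1 then d else 0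
  continuous_toFun := continuous_of_discreteTopology
  zero_at_infty' := by
    rw [cocompact_eq_atTop]
    have h : ∀ᶠ k : ℕ in Filter.atTop, (0:ℝ) = if k = 0 then c else if k = 1 then d else 0 := by
      filter_upwards [Filter.eventually_ge_atTop 2] with k hk
      have h0 : k ≠ 0 := by omega
      have h1 : k ≠ 1 := by omega
      simp [h0, h1]
    exact Filter.Tendsto.congr' h tendsto_const_nhds

@[simp] lemma zf_apply (c d : ℝ) (k : ℕ) :
    zf c d k = if k = 0 then c else if k = 1 then d else 0 := rfl

lemma zf_norm (c d : ℝ) (h : |c| ≤ d) : ‖zf c d‖ = d := by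
  have hd : 0 ≤ d := le_trans (abs_nonneg c) h
  apply le_antisymm
  · rw [← ZeroAtInftyContinuousMap.norm_toBCF_eq_norm]
    refine (BoundedContinuousFunction.norm_le hd).mpr fun k => ?_
    have : (zf c d).toBCF k = zf c d k := rfl
    rw [this, Real.norm_eq_abs]
    rcases k with _ | _ | k <;> simp [abs_of_nonneg hd, h, hd]
  · have := coe_le_norm (zf c d) 1
    simpa [abs_of_nonneg hd] using this

lemma sqrt2_facts : (Real.sqrt 2) ^ 2 = 2 ∧ 1 ≤ Real.sqrt 2 := by
  constructor
  · exact Real.sq_sqrt (by norm_num)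
  · calc (1:ℝ) = Real.sqrt 1 := Real.sqrt_one.symm
      _ ≤ Real.sqrt 2 := Real.sqrt_le_sqrt (by norm_num)

lemma normY_zf (c d : ℝ) (h : |c| ≤ d) :
    pelczynskiNormY (zf c d) = d + Real.sqrt (d ^ 2 / 2) := by
  rw [pelczynskiNormY, zf_norm c d h]
  congr 1
  have ht : (∑' k : ℕ, |zf c d (k + 1)| ^ 2 / 2 ^ (k + 1)) = d ^ 2 / 2 := by
    rw [tsum_eq_single 0 (fun b hb => ?_)]
    · norm_num
    · have h1 : b + 1 ≠ 0 := by omega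
      have h2 : b + 1 ≠ 1 := by omega
      simp [h1, h2, hb]
  rw [ht]

lemma not_strict_convex_Y : ¬ (∀ x y : ZeroAtInftyContinuousMap ℕ ℝ,
    pelczynskiNormY x = 1 → pelczynskiNormY y = 1 → x ≠ y →
    pelczynskiNormY (x + y) < 2) := by
  intro H
  obtain ⟨h2, h1le⟩ := sqrt2_facts
  set a : ℝ := 2 - Real.sqrt 2 with ha
  have hs2lt : Real.sqrt 2 < 2 := by nlinarith
  have hapos : 0 < a := by simp [ha]
  have habs : |a| ≤ a := le_of_eq (abs_of_pos hapos)
  have habs' : |(-a)| ≤ a := by rw [abs_neg]; exact habs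
  have hsa : Real.sqrt (a ^ 2 / 2) = Real.sqrt 2 - 1 := by
    have he : a ^ 2 / 2 = (Real.sqrt 2 - 1) ^ 2 := by nlinarith
    rw [he, Real.sqrt_sq (by linarith)]
  have hx : pelczynskiNormY (zf a a) = 1 := by
    rw [normY_zf a a habs, hsa]; simp [ha]; norm_num
  have hy : pelczynskiNormY (zf (-a) a) = 1 := by
    rw [normY_zf (-a) a habs', hsa]; simp [ha]; norm_num
  have hne : zf a a ≠ zf (-a) a := by
    intro h
    have h0 : (zf a a) 0 = (zf (-a) a) 0 := by rw [h]
    simp at h0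
    linarith
  have hsum : zf a a + zf (-a) a = zf 0 (2 * a) := by
    ext k
    have hc : (zf a a + zf (-a) a) k = zf a a k + zf (-a) a k := rfl
    rw [hc]
    simp only [zf_apply]
    split_ifs <;> ring
  have h2a : |(0:ℝ)| ≤ 2 * a := by simp; linarith
  have hsa2 : Real.sqrt ((2*a) ^ 2 / 2) = 2 * (Real.sqrt 2 - 1) := by
    have he : (2*a) ^ 2 / 2 = (2 * (Real.sqrt 2 - 1)) ^ 2 := by nlinarith
    rw [he, Real.sqrt_sq (by linarith)]
  have hval : pelczynskiNormY (zf a a + zf (-a) a) = 2 := by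
    rw [hsum, normY_zf 0 (2*a) h2a, hsa2]
    simp [ha]; ring
  have := H (zf a a) (zf (-a) a) hx hy hne
  rw [hval] at this
  exact lt_irrefl 2 this

end PelAux

/-- `X = (c₀, ‖·‖_X)` is strictly convex, `Y = (c₀, ‖·‖_Y)` is not,
hence there is no linear isometric isomorphism between X and Y. -/
theorem pelczynski_renormings_not_isometric :
    (∀ x y : ZeroAtInftyContinuousMap ℕ ℝ,
        pelczynskiNormX x = 1 → pelczynskiNormX y = 1 → x ≠ y →
        pelczynskiNormX (x + y) < 2) ∧
    ¬ (∀ x y : ZeroAtInftyContinuousMap ℕ ℝ,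
        pelczynskiNormY x = 1 → pelczynskiNormY y = 1 → x ≠ y →
        pelczynskiNormY (x + y) < 2) ∧
    ¬ ∃ Φ : ZeroAtInftyContinuousMap ℕ ℝ ≃ₗ[ℝ] ZeroAtInftyContinuousMap ℕ ℝ,
        ∀ x, pelczynskiNormY (Φ x) = pelczynskiNormX x := by
  refine ⟨PelAux.strict_convex_X, PelAux.not_strict_convex_Y, ?_⟩
  rintro ⟨Φ, hΦ⟩
  apply PelAux.not_strict_convex_Y
  intro u v hu hv huv
  have hu' : pelczynskiNormX (Φ.symm u) = 1 := by
    rw [← hΦ (Φ.symm u), Φ.apply_symm_apply]; exact hu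
  have hv' : pelczynskiNormX (Φ.symm v) = 1 := by
    rw [← hΦ (Φ.symm v), Φ.apply_symm_apply]; exact hv
  have hne : Φ.symm u ≠ Φ.symm v := fun h => huv (Φ.symm.injective h)
  have h := PelAux.strict_convex_X _ _ hu' hv' hne
  have he : pelczynskiNormX (Φ.symm u + Φ.symm v) = pelczynskiNormY (u + v) := by
    rw [← hΦ (Φ.symm u + Φ.symm v), map_add, Φ.apply_symm_apply, Φ.apply_symm_apply]
  rwa [he] at h
end

section
/- Let X and Y be c₀ with the norms ‖x‖_X = ‖x‖_∞ + (∑_{n≥1} |x_n|²/2ⁿ)^{1/2} and ‖x‖_Y = ‖x‖_∞ + (∑_{n≥1} |x_{n+1}|²/2ⁿ)^{1/2} respectively. For each n, the map Φ_n : X → Y, (x_1,x_2,…) ↦ (x_n, x_1, …, x_{n−1}, x_{n+1}, x_{n+2}, …) is a linear isomorphism, and ‖Φ_n‖·‖Φ_n^{−1}‖ → 1 as n → ∞. Hence the Banach–Mazur distance between X and Y equals 1. -/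
open Filter

namespace PelAux

noncomputable abbrev E := ZeroAtInftyContinuousMap ℕ ℝ

lemma coord_le (x : E) (k : ℕ) : |x k| ≤ ‖x‖ := by
  have h := x.toBCF.norm_coe_le_norm k
  simpa [ZeroAtInftyContinuousMap.norm_toBCF_eq_norm] using h

noncomputable def permMap (σ : Equiv.Perm ℕ) (x : E) : E :=
  { toFun := fun k => x (σ k)
    continuous_toFun := continuous_of_discreteTopology
    zero_at_infty' := by
      have h : Filter.Tendsto (⇑x) (Filter.cocompact ℕ) (nhds 0) :=
        ZeroAtInftyContinuousMapClass.zero_at_infty x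
      rw [cocompact_eq_cofinite] at h ⊢
      exact h.comp σ.injective.tendsto_cofinite }

@[simp] lemma permMap_apply (σ : Equiv.Perm ℕ) (x : E) (k : ℕ) :
    permMap σ x k = x (σ k) := rfl

lemma permMap_norm_le (σ : Equiv.Perm ℕ) (x : E) : ‖permMap σ x‖ ≤ ‖x‖ := by
  rw [← ZeroAtInftyContinuousMap.norm_toBCF_eq_norm]
  refine (BoundedContinuousFunction.norm_le (norm_nonneg x)).mpr fun k => ?_
  simpa using coord_le x (σ k)

lemma permMap_norm (σ : Equiv.Perm ℕ) (x : E) : ‖permMap σ x‖ = ‖x‖ := by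
  refine le_antisymm (permMap_norm_le σ x) ?_
  have h2 : permMap σ.symm (permMap σ x) = x := by
    ext k; simp [permMap]
  have h := permMap_norm_le σ.symm (permMap σ x)
  rwa [h2] at h

noncomputable def permEquiv (σ : Equiv.Perm ℕ) : E ≃ₗ[ℝ] E where
  toFun := permMap σ
  invFun := permMap σ.symm
  map_add' x y := by ext k; simp [permMap]
  map_smul' c x := by ext k; simp [permMap]
  left_inv x := by ext k; simp [permMap]
  right_inv x := by ext k; simp [permMap]

lemma permEquiv_apply (σ : Equiv.Perm ℕ) (x : E) (k : ℕ) :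
    permEquiv σ x k = x (σ k) := rfl

lemma permEquiv_symm_apply (σ : Equiv.Perm ℕ) (y : E) (k : ℕ) :
    (permEquiv σ).symm y k = y (σ.symm k) := rfl

lemma permEquiv_norm (σ : Equiv.Perm ℕ) (x : E) : ‖permEquiv σ x‖ = ‖x‖ :=
  permMap_norm σ x

lemma permEquiv_symm_norm (σ : Equiv.Perm ℕ) (y : E) : ‖(permEquiv σ).symm y‖ = ‖y‖ :=
  permMap_norm σ.symm y

/-- The cycle `(0 ↦ n, k ↦ k-1 for 1 ≤ k ≤ n, k ↦ k for k > n)`. -/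
def cyc (n : ℕ) : Equiv.Perm ℕ where
  toFun k := if k = 0 then n else if k ≤ n then k - 1 else k
  invFun k := if k = n then 0 else if k < n then k + 1 else k
  left_inv k := by
    dsimp only
    rcases Nat.eq_zero_or_pos k with h0 | h0
    · subst h0; simp
    · rcases le_or_gt k n with h1 | h1
      · have hT : (if k = 0 then n else if k ≤ n then k - 1 else k) = k - 1 := by
          rw [if_neg (by omega), if_pos h1]
        rw [hT, if_neg (by omega), if_pos (by omega)]; omega
      · have hT : (if k = 0 then n else if k ≤ n then k - 1 else k) = k := by
          rw [if_neg (by omega), if_neg (by omega)]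
        rw [hT, if_neg (by omega), if_neg (by omega)]
  right_inv k := by
    dsimp only
    rcases eq_or_ne k n with h0 | h0
    · subst h0; simp
    · rcases lt_or_gt_of_ne h0 with h1 | h1
      · have hT : (if k = n then 0 else if k < n then k + 1 else k) = k + 1 := by
          rw [if_neg h0, if_pos h1]
        rw [hT, if_neg (by omega), if_pos (by omega)]; omega
      · have hT : (if k = n then 0 else if k < n then k + 1 else k) = k := by
          rw [if_neg h0, if_neg (by omega)]
        rw [hT, if_neg (by omega), if_neg (by omega)]

lemma summable_geom (c : ℝ) : Summable (fun k : ℕ => c / 2 ^ (k + 1)) := by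
  have h : (fun k : ℕ => c / 2 ^ (k + 1)) = fun k : ℕ => (c / 2) * (1 / 2 : ℝ) ^ k := by
    funext k; simp [div_eq_mul_inv, pow_succ, mul_inv, one_div, inv_pow]; ring
  rw [h]
  exact (summable_geometric_of_lt_one (by norm_num) (by norm_num)).mul_left _

lemma tsum_geom (d : ℝ) : ∑' k : ℕ, d / 2 ^ (k + 1) = d := by
  have h : (fun k : ℕ => d / 2 ^ (k + 1)) = fun k : ℕ => (d / 2) * (1 / 2 : ℝ) ^ k := by
    funext k; simp [div_eq_mul_inv, pow_succ, mul_inv, one_div, inv_pow]; ring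
  rw [h, tsum_mul_left, tsum_geometric_of_lt_one (by norm_num) (by norm_num)]
  norm_num

lemma summable_aux {f : ℕ → ℝ} (c : ℝ) (h0 : ∀ k, 0 ≤ f k)
    (h1 : ∀ k, f k ≤ c / 2 ^ (k + 1)) : Summable f :=
  Summable.of_nonneg_of_le h0 h1 (summable_geom c)

lemma summable_coord (x : E) (g : ℕ → ℕ) :
    Summable (fun k : ℕ => |x (g k)| ^ 2 / 2 ^ (k + 1)) := by
  refine summable_aux (‖x‖ ^ 2) (fun k => by positivity) (fun k => ?_)
  have h := coord_le x (g k)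
  gcongr

lemma tsum_tail (c : ℝ) (hc : 0 ≤ c) (n : ℕ) :
    ∑' k : ℕ, (if n ≤ k then c / 2 ^ (k + 1) else 0) = c * (1 / 2 : ℝ) ^ n := by
  have hg : Summable (fun k : ℕ => if n ≤ k then c / 2 ^ (k + 1) else 0) := by
    refine summable_aux c (fun k => ?_) (fun k => ?_)
    · split_ifs <;> positivity
    · split_ifs
      · exact le_rfl
      · positivity
  have h0 : ∀ i ∈ Finset.range n, (if n ≤ i then c / 2 ^ (i + 1) else 0) = 0 := by
    intro i hi
    rw [if_neg]
    simpa using Finset.mem_range.mp hi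
  have h1 := Summable.sum_add_tsum_nat_add (f := fun k : ℕ => if n ≤ k then c / 2 ^ (k + 1) else 0) n hg
  rw [Finset.sum_eq_zero h0, zero_add] at h1
  rw [← h1]
  have h2 : (fun k : ℕ => if n ≤ k + n then c / 2 ^ (k + n + 1) else 0)
      = fun k : ℕ => (c * (1 / 2 : ℝ) ^ n) / 2 ^ (k + 1) := by
    funext k
    rw [if_pos (Nat.le_add_left n k)]
    have h3 : (2 : ℝ) ^ (k + n + 1) = 2 ^ (k + 1) * 2 ^ n := by
      rw [← pow_add]; congr 1; omega
    rw [h3]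
    simp [div_eq_mul_inv, mul_inv, one_div, inv_pow]
    ring
  rw [h2, tsum_geom]

lemma sqrt_add_le (a b : ℝ) (ha : 0 ≤ a) (hb : 0 ≤ b) :
    Real.sqrt (a + b) ≤ Real.sqrt a + Real.sqrt b := by
  have h : a + b ≤ (Real.sqrt a + Real.sqrt b) ^ 2 := by
    nlinarith [Real.sq_sqrt ha, Real.sq_sqrt hb, Real.sqrt_nonneg a, Real.sqrt_nonneg b]
  calc Real.sqrt (a + b) ≤ Real.sqrt ((Real.sqrt a + Real.sqrt b) ^ 2) := Real.sqrt_le_sqrt h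
    _ = Real.sqrt a + Real.sqrt b := Real.sqrt_sq (by positivity)

/-- The key quantitative estimate used for both directions. -/
lemma key_bound (x : E) (h w : ℕ → ℕ) (n : ℕ)
    (hc : ∀ k, h k = w k ∨ n ≤ k) :
    Real.sqrt (∑' k : ℕ, |x (h k)| ^ 2 / 2 ^ (k + 1)) ≤
      Real.sqrt (∑' k : ℕ, |x (w k)| ^ 2 / 2 ^ (k + 1)) + ‖x‖ * Real.sqrt ((1 / 2 : ℝ) ^ n) := by
  have hsf : Summable (fun k : ℕ => |x (h k)| ^ 2 / 2 ^ (k + 1)) := summable_coord x h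
  have hsw : Summable (fun k : ℕ => |x (w k)| ^ 2 / 2 ^ (k + 1)) := summable_coord x w
  have hse : Summable (fun k : ℕ => if n ≤ k then ‖x‖ ^ 2 / 2 ^ (k + 1) else 0) := by
    refine summable_aux (‖x‖ ^ 2) (fun k => ?_) (fun k => ?_)
    · split_ifs <;> positivity
    · split_ifs
      · exact le_rfl
      · positivity
  have hpt : ∀ k : ℕ, |x (h k)| ^ 2 / 2 ^ (k + 1) ≤
      |x (w k)| ^ 2 / 2 ^ (k + 1) + (if n ≤ k then ‖x‖ ^ 2 / 2 ^ (k + 1) else 0) := by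
    intro k
    rcases hc k with heq | hk
    · rw [heq]
      have : (0:ℝ) ≤ (if n ≤ k then ‖x‖ ^ 2 / 2 ^ (k + 1) else 0) := by
        split_ifs <;> positivity
      linarith
    · rw [if_pos hk]
      have h1 : |x (h k)| ^ 2 / 2 ^ (k + 1) ≤ ‖x‖ ^ 2 / 2 ^ (k + 1) := by
        have h2 := coord_le x (h k)
        gcongr
      have h3 : (0:ℝ) ≤ |x (w k)| ^ 2 / 2 ^ (k + 1) := by positivity
      linarith
  have hA0 : 0 ≤ ∑' k : ℕ, |x (w k)| ^ 2 / 2 ^ (k + 1) :=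
    tsum_nonneg fun k => by positivity
  have hle : (∑' k : ℕ, |x (h k)| ^ 2 / 2 ^ (k + 1)) ≤
      (∑' k : ℕ, |x (w k)| ^ 2 / 2 ^ (k + 1)) + ‖x‖ ^ 2 * (1 / 2 : ℝ) ^ n := by
    calc (∑' k : ℕ, |x (h k)| ^ 2 / 2 ^ (k + 1))
        ≤ ∑' k : ℕ, (|x (w k)| ^ 2 / 2 ^ (k + 1) +
            (if n ≤ k then ‖x‖ ^ 2 / 2 ^ (k + 1) else 0)) :=
          Summable.tsum_le_tsum hpt hsf (hsw.add hse)
      _ = (∑' k : ℕ, |x (w k)| ^ 2 / 2 ^ (k + 1)) +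
            ∑' k : ℕ, (if n ≤ k then ‖x‖ ^ 2 / 2 ^ (k + 1) else 0) := Summable.tsum_add hsw hse
      _ = (∑' k : ℕ, |x (w k)| ^ 2 / 2 ^ (k + 1)) + ‖x‖ ^ 2 * (1 / 2 : ℝ) ^ n := by
          rw [tsum_tail (‖x‖ ^ 2) (by positivity) n]
  calc Real.sqrt (∑' k : ℕ, |x (h k)| ^ 2 / 2 ^ (k + 1))
      ≤ Real.sqrt ((∑' k : ℕ, |x (w k)| ^ 2 / 2 ^ (k + 1)) + ‖x‖ ^ 2 * (1 / 2 : ℝ) ^ n) :=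
        Real.sqrt_le_sqrt hle
    _ ≤ Real.sqrt (∑' k : ℕ, |x (w k)| ^ 2 / 2 ^ (k + 1)) +
          Real.sqrt (‖x‖ ^ 2 * (1 / 2 : ℝ) ^ n) := sqrt_add_le _ _ hA0 (by positivity)
    _ = Real.sqrt (∑' k : ℕ, |x (w k)| ^ 2 / 2 ^ (k + 1)) + ‖x‖ * Real.sqrt ((1 / 2 : ℝ) ^ n) := by
        rw [Real.sqrt_mul (sq_nonneg _), Real.sqrt_sq (norm_nonneg _)]

/-- the norm-one "first basis vector" of c₀. -/
noncomputable def e0 : E :=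
  { toFun := fun k => if k = 0 then (1:ℝ) else 0
    continuous_toFun := continuous_of_discreteTopology
    zero_at_infty' := by
      rw [cocompact_eq_cofinite]
      apply Filter.Tendsto.congr' _ tendsto_const_nhds
      rw [Filter.eventuallyEq_iff_exists_mem]
      refine ⟨{k : ℕ | k ≠ 0}, ?_, fun k hk => ?_⟩
      · rw [Filter.mem_cofinite]
        simpa using Set.finite_singleton 0
      · simp [Set.mem_setOf_eq.mp hk] }

lemma e0_ne_zero : e0 ≠ 0 := by
  intro h
  have h1 : e0 0 = (0 : E) 0 := by rw [h]
  simp [e0] at h1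

lemma normX_pos : 0 < pelczynskiNormX e0 := by
  have h1 : 0 < ‖e0‖ := norm_pos_iff.mpr e0_ne_zero
  have h2 : 0 ≤ Real.sqrt (∑' k : ℕ, |e0 k| ^ 2 / 2 ^ (k + 1)) := Real.sqrt_nonneg _
  unfold pelczynskiNormX
  linarith

lemma normY_nonneg (y : E) : 0 ≤ pelczynskiNormY y := by
  have h2 : 0 ≤ Real.sqrt (∑' k : ℕ, |y (k + 1)| ^ 2 / 2 ^ (k + 1)) := Real.sqrt_nonneg _
  have h1 : 0 ≤ ‖y‖ := norm_nonneg _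
  unfold pelczynskiNormY
  linarith

lemma forward_bound (n : ℕ) (x : E) :
    pelczynskiNormY (permEquiv (cyc n) x) ≤
      (1 + Real.sqrt ((1 / 2 : ℝ) ^ n)) * pelczynskiNormX x := by
  have hkey := key_bound x (fun k => cyc n (k + 1)) (fun k => k) n (by
    intro k
    rcases lt_or_ge k n with h | h
    · left
      show (if k + 1 = 0 then n else if k + 1 ≤ n then k + 1 - 1 else k + 1) = k
      rw [if_neg (by omega), if_pos (by omega)]; omega
    · right; exact h)
  have hnorm : ‖permEquiv (cyc n) x‖ = ‖x‖ := permEquiv_norm _ _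
  have hQ : (∑' k : ℕ, |(permEquiv (cyc n) x) (k + 1)| ^ 2 / 2 ^ (k + 1))
      = ∑' k : ℕ, |x (cyc n (k + 1))| ^ 2 / 2 ^ (k + 1) := rfl
  unfold pelczynskiNormY pelczynskiNormX
  rw [hnorm, hQ]
  have hs : 0 ≤ Real.sqrt ((1 / 2 : ℝ) ^ n) := Real.sqrt_nonneg _
  have hq : 0 ≤ Real.sqrt (∑' k : ℕ, |x k| ^ 2 / 2 ^ (k + 1)) := Real.sqrt_nonneg _
  have hx : 0 ≤ ‖x‖ := norm_nonneg _
  nlinarith [hkey, mul_nonneg hs hq]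

lemma backward_bound (n : ℕ) (y : E) :
    pelczynskiNormX ((permEquiv (cyc n)).symm y) ≤
      (1 + Real.sqrt ((1 / 2 : ℝ) ^ n)) * pelczynskiNormY y := by
  have hkey := key_bound y (fun k => (cyc n).symm k) (fun k => k + 1) n (by
    intro k
    rcases lt_or_ge k n with h | h
    · left
      show (if k = n then 0 else if k < n then k + 1 else k) = k + 1
      rw [if_neg (by omega), if_pos h]
    · right; exact h)
  have hnorm : ‖(permEquiv (cyc n)).symm y‖ = ‖y‖ := permEquiv_symm_norm _ _
  have hQ : (∑' k : ℕ, |((permEquiv (cyc n)).symm y) k| ^ 2 / 2 ^ (k + 1))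
      = ∑' k : ℕ, |y ((cyc n).symm k)| ^ 2 / 2 ^ (k + 1) := rfl
  unfold pelczynskiNormY pelczynskiNormX
  rw [hnorm, hQ]
  have hs : 0 ≤ Real.sqrt ((1 / 2 : ℝ) ^ n) := Real.sqrt_nonneg _
  have hq : 0 ≤ Real.sqrt (∑' k : ℕ, |y (k + 1)| ^ 2 / 2 ^ (k + 1)) := Real.sqrt_nonneg _
  have hx : 0 ≤ ‖y‖ := norm_nonneg _
  nlinarith [hkey, mul_nonneg hs hq]

lemma tendsto_CC :
    Tendsto (fun n : ℕ => (1 + Real.sqrt ((1 / 2 : ℝ) ^ n)) *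
      (1 + Real.sqrt ((1 / 2 : ℝ) ^ n))) atTop (nhds 1) := by
  have h1 : Tendsto (fun n : ℕ => ((1 : ℝ) / 2) ^ n) atTop (nhds 0) :=
    tendsto_pow_atTop_nhds_zero_of_lt_one (by norm_num) (by norm_num)
  have h2 : Tendsto (fun n : ℕ => Real.sqrt ((1 / 2 : ℝ) ^ n)) atTop (nhds (Real.sqrt 0)) :=
    (Real.continuous_sqrt.tendsto 0).comp h1
  rw [Real.sqrt_zero] at h2
  have h3 : Tendsto (fun n : ℕ => 1 + Real.sqrt ((1 / 2 : ℝ) ^ n)) atTop (nhds (1 + 0)) :=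
    (tendsto_const_nhds (x := (1:ℝ)) (f := atTop (α := ℕ))).add h2
  rw [add_zero] at h3
  have h4 := h3.mul h3
  rw [mul_one] at h4
  exact h4

end PelAux

open PelAux in
/-- the coordinate permutations
`Φ_n : (x_0, x_1, …) ↦ (x_n, x_0, …, x_{n-1}, x_{n+1}, …)` are linear
isomorphisms from `X = (c₀, ‖·‖_X)` to `Y = (c₀, ‖·‖_Y)` with
`‖Φ_n‖·‖Φ_n⁻¹‖ → 1`; hence the Banach–Mazur distance between X and Y is 1. -/
theorem pelczynski_renormings_almost_isometric :
    ∃ (Φ : ℕ → (ZeroAtInftyContinuousMap ℕ ℝ ≃ₗ[ℝ] ZeroAtInftyContinuousMap ℕ ℝ))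
      (C C' : ℕ → ℝ),
      (∀ (n : ℕ) (x : ZeroAtInftyContinuousMap ℕ ℝ) (k : ℕ),
        Φ n x k = if k = 0 then x n else if k ≤ n then x (k - 1) else x k) ∧
      (∀ (n : ℕ) (x : ZeroAtInftyContinuousMap ℕ ℝ),
        pelczynskiNormY (Φ n x) ≤ C n * pelczynskiNormX x) ∧
      (∀ (n : ℕ) (y : ZeroAtInftyContinuousMap ℕ ℝ),
        pelczynskiNormX ((Φ n).symm y) ≤ C' n * pelczynskiNormY y) ∧
      Tendsto (fun n => C n * C' n) atTop (nhds 1) ∧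
      sInf {c : ℝ |
        ∃ (Ψ : ZeroAtInftyContinuousMap ℕ ℝ ≃ₗ[ℝ] ZeroAtInftyContinuousMap ℕ ℝ)
          (a b : ℝ),
          (∀ x, pelczynskiNormY (Ψ x) ≤ a * pelczynskiNormX x) ∧
          (∀ y, pelczynskiNormX (Ψ.symm y) ≤ b * pelczynskiNormY y) ∧
          c = a * b} = 1 := by
  refine ⟨fun n => permEquiv (cyc n), fun n => 1 + Real.sqrt ((1 / 2 : ℝ) ^ n),
    fun n => 1 + Real.sqrt ((1 / 2 : ℝ) ^ n), ?_, ?_, ?_, ?_, ?_⟩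
  · intro n x k
    show x (cyc n k) = _
    have hck : cyc n k = if k = 0 then n else if k ≤ n then k - 1 else k := rfl
    rw [hck, apply_ite (⇑x), apply_ite (⇑x)]
  · exact fun n x => forward_bound n x
  · exact fun n y => backward_bound n y
  · exact tendsto_CC
  · -- the infimum
    set S := {c : ℝ |
        ∃ (Ψ : ZeroAtInftyContinuousMap ℕ ℝ ≃ₗ[ℝ] ZeroAtInftyContinuousMap ℕ ℝ)
          (a b : ℝ),
          (∀ x, pelczynskiNormY (Ψ x) ≤ a * pelczynskiNormX x) ∧
          (∀ y, pelczynskiNormX (Ψ.symm y) ≤ b * pelczynskiNormY y) ∧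
          c = a * b} with hS
    have hlb : ∀ c ∈ S, (1:ℝ) ≤ c := by
      rintro c ⟨Ψ, a, b, hA, hB, rfl⟩
      have hP : 0 < pelczynskiNormX e0 := normX_pos
      have hNY : 0 ≤ pelczynskiNormY (Ψ e0) := normY_nonneg _
      have h1 : pelczynskiNormX e0 ≤ b * pelczynskiNormY (Ψ e0) := by
        have h := hB (Ψ e0)
        rwa [LinearEquiv.symm_apply_apply] at h
      have h2 : pelczynskiNormY (Ψ e0) ≤ a * pelczynskiNormX e0 := hA e0
      have hb : 0 < b := by
        rcases le_or_gt b 0 with hb0 | hb0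
        · exfalso
          have hbn : b * pelczynskiNormY (Ψ e0) ≤ 0 :=
            mul_nonpos_iff.mpr (Or.inr ⟨hb0, hNY⟩)
          linarith
        · exact hb0
      have h3 : b * pelczynskiNormY (Ψ e0) ≤ b * (a * pelczynskiNormX e0) :=
        mul_le_mul_of_nonneg_left h2 hb.le
      nlinarith
    have hmem : ∀ n : ℕ, (1 + Real.sqrt ((1 / 2 : ℝ) ^ n)) *
        (1 + Real.sqrt ((1 / 2 : ℝ) ^ n)) ∈ S := fun n =>
      ⟨permEquiv (cyc n), 1 + Real.sqrt ((1 / 2 : ℝ) ^ n), 1 + Real.sqrt ((1 / 2 : ℝ) ^ n),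
        fun x => forward_bound n x, fun y => backward_bound n y, rfl⟩
    have hbdd : BddBelow S := ⟨1, fun c hc => hlb c hc⟩
    have hup : sInf S ≤ 1 :=
      ge_of_tendsto' tendsto_CC (fun n => csInf_le hbdd (hmem n))
    exact le_antisymm hup (le_csInf ⟨_, hmem 0⟩ hlb)
end

section
/- Every Banach space of almost universal disposition X has the property that any four open balls of radius 1 in X that pairwise intersect have a common point. -/
/-- A Banach space `X` is of almost universal disposition if for all
finite-dimensional normed spaces `E`, `F`, isometries `T : E → X` and
`S : E → F`, and every `ε > 0`, there is a linear map `T̂ : F → X` with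
`T̂ ∘ S = T` and `(1+ε)⁻¹‖y‖ ≤ ‖T̂ y‖ ≤ (1+ε)‖y‖` for all `y ∈ F`. -/
def IsAlmostUniversalDisposition (X : Type*) [NormedAddCommGroup X]
    [NormedSpace ℝ X] : Prop :=
  ∀ (E F : Type) (_ : NormedAddCommGroup E) (_ : NormedSpace ℝ E)
    (_ : NormedAddCommGroup F) (_ : NormedSpace ℝ F),
    FiniteDimensional ℝ E → FiniteDimensional ℝ F →
    ∀ (T : E →ₗᵢ[ℝ] X) (S : E →ₗᵢ[ℝ] F) (ε : ℝ), 0 < ε →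
      ∃ That : F →ₗ[ℝ] X,
        (∀ e : E, That (S e) = T e) ∧
        ∀ y : F, (1 + ε)⁻¹ * ‖y‖ ≤ ‖That y‖ ∧ ‖That y‖ ≤ (1 + ε) * ‖y‖

section AudAux

variable {E : Type} [NormedAddCommGroup E] [NormedSpace ℝ E]

/-- Set of "admissible functionals" used to define the extension norm. -/
def audD (v : Fin 4 → E) (r : ℝ) : Set ((E →L[ℝ] ℝ) × ℝ) :=
  {p | ‖p.1‖ ≤ 1 ∧ ∀ i, |p.1 (v i) - p.2| ≤ r}

/-- The candidate norm on `E × ℝ`. -/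
noncomputable def audN (v : Fin 4 → E) (r : ℝ) (w : E × ℝ) : ℝ :=
  sSup ((fun p => |p.1 w.1 + w.2 * p.2|) '' audD v r)

theorem audD_mem_zero (v : Fin 4 → E) {r : ℝ} (hr : 0 ≤ r) :
    ((0 : E →L[ℝ] ℝ), r) ∈ audD v r := by
  constructor
  · simp
  · intro i; simp [abs_of_nonneg hr]

theorem audD_bdd (v : Fin 4 → E) (r : ℝ) (w : E × ℝ) :
    BddAbove ((fun p => |p.1 w.1 + w.2 * p.2|) '' audD v r) := by
  refine ⟨‖w.1‖ + |w.2| * (r + ‖v 0‖), ?_⟩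
  rintro _ ⟨p, ⟨hp1, hp2⟩, rfl⟩
  have h1 : |p.1 w.1| ≤ ‖w.1‖ := by
    have := p.1.le_opNorm w.1
    rw [Real.norm_eq_abs] at this
    calc |p.1 w.1| ≤ ‖p.1‖ * ‖w.1‖ := this
      _ ≤ 1 * ‖w.1‖ := by gcongr
      _ = ‖w.1‖ := one_mul _
  have h0 : |p.1 (v 0)| ≤ ‖v 0‖ := by
    have := p.1.le_opNorm (v 0)
    rw [Real.norm_eq_abs] at this
    calc |p.1 (v 0)| ≤ ‖p.1‖ * ‖v 0‖ := this
      _ ≤ 1 * ‖v 0‖ := by gcongr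
      _ = ‖v 0‖ := one_mul _
  have h2 : |p.2| ≤ r + ‖v 0‖ := by
    have := hp2 0
    have : |p.2| ≤ |p.1 (v 0) - p.2| + |p.1 (v 0)| := by
      have := abs_sub_abs_le_abs_sub p.2 (p.1 (v 0))
      have h3 := abs_sub_comm p.2 (p.1 (v 0))
      linarith [abs_nonneg (p.1 (v 0))]
    linarith [hp2 0]
  calc |p.1 w.1 + w.2 * p.2| ≤ |p.1 w.1| + |w.2 * p.2| := abs_add_le _ _
    _ = |p.1 w.1| + |w.2| * |p.2| := by rw [abs_mul]
    _ ≤ ‖w.1‖ + |w.2| * (r + ‖v 0‖) := by gcongr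

theorem audN_le (v : Fin 4 → E) {r : ℝ} (hr : 0 ≤ r) {w : E × ℝ} {c : ℝ}
    (hc : ∀ p ∈ audD v r, |p.1 w.1 + w.2 * p.2| ≤ c) : audN v r w ≤ c := by
  apply csSup_le (Set.Nonempty.image _ ⟨_, audD_mem_zero v hr⟩)
  rintro _ ⟨p, hp, rfl⟩
  exact hc p hp

theorem le_audN (v : Fin 4 → E) (r : ℝ) {p} (hp : p ∈ audD v r) (w : E × ℝ) :
    |p.1 w.1 + w.2 * p.2| ≤ audN v r w :=
  le_csSup (audD_bdd v r w) ⟨p, hp, rfl⟩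

open Finset in
theorem aud_exists_norming (v : Fin 4 → E) {r : ℝ}
    (hd : ∀ i j, ‖v i - v j‖ ≤ 2 * r) (e : E) (he : e ≠ 0) :
    ∃ p ∈ audD v r, p.1 e = ‖e‖ := by
  obtain ⟨g, hg1, hge⟩ := exists_dual_vector ℝ e (norm_ne_zero_iff.mpr he)
  set a := (univ : Finset (Fin 4)).sup' ⟨0, mem_univ 0⟩ (fun i => g (v i)) with ha
  set b := (univ : Finset (Fin 4)).inf' ⟨0, mem_univ 0⟩ (fun i => g (v i)) with hb
  have hab : a - b ≤ 2 * r := by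
    obtain ⟨i0, -, hi0⟩ := exists_mem_eq_sup' (⟨0, mem_univ 0⟩ : (univ : Finset (Fin 4)).Nonempty) (fun i => g (v i))
    obtain ⟨j0, -, hj0⟩ := exists_mem_eq_inf' (⟨0, mem_univ 0⟩ : (univ : Finset (Fin 4)).Nonempty) (fun i => g (v i))
    have h1 : |g (v i0 - v j0)| ≤ ‖v i0 - v j0‖ := by
      have := g.le_opNorm (v i0 - v j0)
      rw [Real.norm_eq_abs, hg1, one_mul] at this
      exact this
    have h2 : g (v i0) - g (v j0) ≤ ‖v i0 - v j0‖ := by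
      rw [← map_sub]
      exact (le_abs_self _).trans h1
    rw [ha, hb, hi0, hj0]
    exact h2.trans (hd i0 j0)
  refine ⟨(g, (a + b) / 2), ⟨hg1.le, fun i => ?_⟩, by simpa using hge⟩
  have h1 : g (v i) ≤ a := le_sup' (fun i => g (v i)) (mem_univ i)
  have h2 : b ≤ g (v i) := inf'_le (fun i => g (v i)) (mem_univ i)
  rw [abs_le]
  constructor <;> linarith

theorem audN_coe (v : Fin 4 → E) {r : ℝ} (hr : 0 ≤ r)
    (hd : ∀ i j, ‖v i - v j‖ ≤ 2 * r) (e : E) : audN v r (e, 0) = ‖e‖ := by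
  rcases eq_or_ne e 0 with rfl | he
  · apply le_antisymm
    · apply audN_le v hr; rintro p hp; simp
    · have := le_audN v r (audD_mem_zero v hr) (0, 0)
      simpa using this
  · apply le_antisymm
    · apply audN_le v hr
      rintro p ⟨hp1, hp2⟩
      have := p.1.le_opNorm e
      rw [Real.norm_eq_abs] at this
      calc |p.1 (e, (0:ℝ)).1 + (e, (0:ℝ)).2 * p.2| = |p.1 e| := by norm_num
        _ ≤ ‖p.1‖ * ‖e‖ := this
        _ ≤ 1 * ‖e‖ := by gcongr
        _ = ‖e‖ := one_mul _
    · obtain ⟨p, hp, hpe⟩ := aud_exists_norming v hd e he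
      have := le_audN v r hp (e, 0)
      simpa [hpe, abs_of_nonneg (norm_nonneg e)] using this

end AudAux

section More
variable {E : Type} [NormedAddCommGroup E] [NormedSpace ℝ E]

theorem audN_zero (v : Fin 4 → E) {r : ℝ} (hr : 0 ≤ r) : audN v r 0 = 0 := by
  apply le_antisymm
  · apply audN_le v hr; intro p hp; simp
  · have := le_audN v r (audD_mem_zero v hr) 0
    simpa using this

theorem audN_add (v : Fin 4 → E) {r : ℝ} (hr : 0 ≤ r) (w w' : E × ℝ) :
    audN v r (w + w') ≤ audN v r w + audN v r w' := by
  apply audN_le v hr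
  intro p hp
  have h1 := le_audN v r hp w
  have h2 := le_audN v r hp w'
  have : p.1 (w + w').1 + (w + w').2 * p.2
      = (p.1 w.1 + w.2 * p.2) + (p.1 w'.1 + w'.2 * p.2) := by
    simp [Prod.fst_add, Prod.snd_add, map_add]; ring
  rw [this]
  exact (abs_add_le _ _).trans (by linarith)

theorem audN_neg (v : Fin 4 → E) (r : ℝ) (w : E × ℝ) :
    audN v r (-w) = audN v r w := by
  unfold audN
  congr 1
  ext c
  have key : ∀ p : (E →L[ℝ] ℝ) × ℝ,
      |p.1 (-w).1 + (-w).2 * p.2| = |p.1 w.1 + w.2 * p.2| := by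
    intro p
    have : p.1 (-w).1 + (-w).2 * p.2 = -(p.1 w.1 + w.2 * p.2) := by
      simp [Prod.fst_neg, Prod.snd_neg]; ring
    rw [this, abs_neg]
  constructor <;> rintro ⟨p, hp, hc⟩ <;> exact ⟨p, hp, by simp only [key] at hc ⊢; exact hc⟩

theorem audN_smul (v : Fin 4 → E) {r : ℝ} (hr : 0 ≤ r) (c : ℝ) (w : E × ℝ) :
    audN v r (c • w) ≤ |c| * audN v r w := by
  apply audN_le v hr
  intro p hp
  have h1 := le_audN v r hp w
  have : p.1 (c • w).1 + (c • w).2 * p.2 = c * (p.1 w.1 + w.2 * p.2) := by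
    simp [Prod.smul_fst, Prod.smul_snd, map_smul, smul_eq_mul]; ring
  rw [this, abs_mul]
  gcongr

theorem audN_eq_zero (v : Fin 4 → E) {r : ℝ} (hr : 0 < r)
    (hd : ∀ i j, ‖v i - v j‖ ≤ 2 * r) (w : E × ℝ) (hw : audN v r w = 0) :
    w = 0 := by
  have h2 : w.2 = 0 := by
    have := le_audN v r (audD_mem_zero v hr.le) w
    rw [hw] at this
    simp only [ContinuousLinearMap.zero_apply, zero_add, abs_mul] at this
    have hz : |w.2| * |r| = 0 := le_antisymm (by simpa using this) (by positivity)
    rcases mul_eq_zero.mp hz with h | h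
    · exact abs_eq_zero.mp h
    · exact absurd h (by simpa using hr.ne')
  have h1 : w.1 = 0 := by
    by_contra h
    have hc := audN_coe v hr.le hd w.1
    have : (w.1, (0:ℝ)) = w := by rw [← h2]
    rw [this, hw] at hc
    exact h (norm_eq_zero.mp hc.symm)
  exact Prod.ext h1 h2

theorem audN_ball (v : Fin 4 → E) {r : ℝ} (hr : 0 ≤ r) (i : Fin 4) :
    audN v r (-(v i), 1) ≤ r := by
  apply audN_le v hr
  rintro p ⟨hp1, hp2⟩
  have : p.1 (-(v i), (1:ℝ)).1 + (-(v i), (1:ℝ)).2 * p.2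
      = -(p.1 (v i) - p.2) := by simp; ring
  rw [this, abs_neg]
  exact hp2 i

end More

/-- in a Banach space of almost universal disposition, any four
pairwise intersecting open balls of radius 1 have a common point. -/
theorem aud_four_ball_property (X : Type) [NormedAddCommGroup X]
    [NormedSpace ℝ X] [CompleteSpace X]
    (hX : IsAlmostUniversalDisposition X)
    (x : Fin 4 → X)
    (h : ∀ i j : Fin 4, (Metric.ball (x i) 1 ∩ Metric.ball (x j) 1).Nonempty) :
    (⋂ i : Fin 4, Metric.ball (x i) 1).Nonempty := by
  classical
  have hxx : ∀ i j, ‖x i - x j‖ < 2 := by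
    intro i j
    obtain ⟨z, hz1, hz2⟩ := h i j
    rw [Metric.mem_ball] at hz1 hz2
    have t := dist_triangle (x i) z (x j)
    rw [dist_comm (x i) z] at t
    have : dist (x i) (x j) < 2 := by linarith
    rwa [dist_eq_norm] at this
  set E := ↥(Submodule.span ℝ (Set.range x)) with hE
  haveI hfe : FiniteDimensional ℝ E := FiniteDimensional.span_of_finite ℝ (Set.finite_range x)
  set v : Fin 4 → E := fun i => ⟨x i, Submodule.subset_span ⟨i, rfl⟩⟩ with hv
  set r : ℝ := max (1/2)
      (((Finset.univ : Finset (Fin 4 × Fin 4))).sup' Finset.univ_nonempty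
        (fun q => ‖x q.1 - x q.2‖ / 2)) with hrdef
  have hr0 : 0 < r := lt_of_lt_of_le (by norm_num) (le_max_left _ _)
  have hr1 : r < 1 := by
    apply max_lt (by norm_num)
    rw [Finset.sup'_lt_iff]
    intro q _
    have := hxx q.1 q.2
    linarith
  have hd : ∀ i j, ‖v i - v j‖ ≤ 2 * r := by
    intro i j
    have he : ‖v i - v j‖ = ‖x i - x j‖ := rfl
    rw [he]
    have h2 : ‖x i - x j‖ / 2 ≤ r :=
      le_trans (Finset.le_sup' (fun q : Fin 4 × Fin 4 => ‖x q.1 - x q.2‖ / 2)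
        (Finset.mem_univ (i, j))) (le_max_right _ _)
    linarith
  let nF : NormedAddCommGroup (E × ℝ) := AddGroupNorm.toNormedAddCommGroup
    { toFun := audN v r
      map_zero' := audN_zero v hr0.le
      add_le' := audN_add v hr0.le
      neg' := audN_neg v r
      eq_zero_of_map_eq_zero' := fun w hw => audN_eq_zero v hr0 hd w hw }
  let nSp : @NormedSpace ℝ (E × ℝ) Real.normedField nF.toSeminormedAddCommGroup :=
    @NormedSpace.mk ℝ (E × ℝ) Real.normedField nF.toSeminormedAddCommGroup
      (inferInstance : Module ℝ (E × ℝ))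
      (fun c w => audN_smul v hr0.le c w)
  haveI hfF : FiniteDimensional ℝ (E × ℝ) := inferInstance
  set ε : ℝ := (1 - r) / 2 with hεdef
  have hε : 0 < ε := by rw [hεdef]; linarith
  let S : @LinearIsometry ℝ ℝ _ _ (RingHom.id ℝ) E (E × ℝ) _ nF.toSeminormedAddCommGroup _ _ :=
    @LinearIsometry.mk ℝ ℝ _ _ (RingHom.id ℝ) E (E × ℝ) _ nF.toSeminormedAddCommGroup _ _
      (LinearMap.inl ℝ E ℝ) (fun e => audN_coe v hr0.le hd e)
  obtain ⟨That, hcomm, hb⟩ := hX E (E × ℝ) inferInstance inferInstance nF nSp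
    hfe hfF (Submodule.subtypeₗᵢ _) S ε hε
  refine ⟨That (0, 1), ?_⟩
  rw [Set.mem_iInter]
  intro i
  rw [Metric.mem_ball, dist_eq_norm]
  have hS : S (v i) = ((v i, 0) : E × ℝ) := by
    show (LinearMap.inl ℝ E ℝ) (v i) = _
    simp
  have hx_i : That ((v i, 0) : E × ℝ) = x i := by
    rw [← hS]
    exact hcomm (v i)
  have hsub : That ((0, 1) : E × ℝ) - x i = That ((-(v i), 1) : E × ℝ) := by
    rw [← hx_i, ← map_sub]
    congr 1
    ext
    · simp
    · simp
  rw [hsub]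
  have hb2 := (hb ((-(v i), 1) : E × ℝ)).2
  have hfinal : ‖That ((-(v i), 1) : E × ℝ)‖ ≤ (1 + ε) * r :=
    hb2.trans (mul_le_mul_of_nonneg_left (audN_ball v hr0.le i)
      (by linarith : (0:ℝ) ≤ 1 + ε))
  refine lt_of_le_of_lt hfinal ?_
  rw [hεdef]
  nlinarith
end

section
/- Let E be a finite-dimensional normed space, N ∈ ℕ, and S₁ : E → ℓ∞^N a linear map satisfying (1+ε)⁻¹‖S₁x‖_∞ ≤ ‖x‖ ≤ ‖S₁x‖_∞ for all x ∈ E, where ε > 0. Define a new norm on ℝ^N whose unit ball is the convex hull of S₁(B_E) and the unit ball of ℓ∞^N, and call the resulting space F. Then S₁, viewed as a map E → F, is an isometry, and (1+ε)⁻¹‖y‖_∞ ≤ ‖y‖_F ≤ ‖y‖_∞ for all y ∈ ℝ^N. -/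
set_option maxHeartbeats 1000000


/-- renorming ℓ∞^N so that `S₁` becomes an isometry.  The new
norm on ℝ^N is the gauge (Minkowski functional) of the convex hull of
`S₁(B_E) ∪ B_{ℓ∞^N}`; with it, `S₁` is an isometry and the new norm is
`(1+ε)⁻¹`-equivalent to the max norm. -/
theorem renorming_makes_S1_isometry
    (E : Type) [NormedAddCommGroup E] [NormedSpace ℝ E] [FiniteDimensional ℝ E]
    (N : ℕ) (ε : ℝ) (hε : 0 < ε)
    (S₁ : E →ₗ[ℝ] (Fin N → ℝ))
    (h : ∀ x : E, (1 + ε)⁻¹ * ‖S₁ x‖ ≤ ‖x‖ ∧ ‖x‖ ≤ ‖S₁ x‖) :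
    (∀ x : E,
      gauge (convexHull ℝ ((S₁ '' Metric.closedBall 0 1) ∪ Metric.closedBall 0 1))
        (S₁ x) = ‖x‖) ∧
    (∀ y : Fin N → ℝ,
      (1 + ε)⁻¹ * ‖y‖ ≤
        gauge (convexHull ℝ ((S₁ '' Metric.closedBall 0 1) ∪ Metric.closedBall 0 1)) y ∧
      gauge (convexHull ℝ ((S₁ '' Metric.closedBall 0 1) ∪ Metric.closedBall 0 1)) y
        ≤ ‖y‖) := by
  have hε1 : (0:ℝ) < 1 + ε := by linarith
  set K := convexHull ℝ ((S₁ '' Metric.closedBall 0 1) ∪ Metric.closedBall 0 1) with hKdef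
  -- unit ball inside K
  have hBK : Metric.closedBall (0 : Fin N → ℝ) 1 ⊆ K :=
    Set.subset_union_right.trans (subset_convexHull ℝ _)
  have habsB : Absorbent ℝ (Metric.closedBall (0 : Fin N → ℝ) 1) :=
    (absorbent_ball_zero one_pos).mono Metric.ball_subset_closedBall
  have habsK : Absorbent ℝ K := habsB.mono hBK
  -- K inside big ball
  have hKball : K ⊆ Metric.closedBall (0 : Fin N → ℝ) (1 + ε) := by
    rw [hKdef]
    apply convexHull_min _ (convex_closedBall _ _)
    apply Set.union_subset
    · rintro y ⟨u, hu, rfl⟩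
      rw [Metric.mem_closedBall, dist_zero_right]
      have hu' : ‖u‖ ≤ 1 := by simpa using hu
      have h2 : ‖S₁ u‖ ≤ (1 + ε) * ‖u‖ := by
        rw [← inv_mul_le_iff₀ hε1]; exact (h u).1
      nlinarith
    · intro y hy
      rw [Metric.mem_closedBall, dist_zero_right]
      have : ‖y‖ ≤ 1 := by simpa using hy
      linarith
  -- upper bound for gauge
  have hupper : ∀ y : Fin N → ℝ, gauge K y ≤ ‖y‖ := by
    intro y
    have := gauge_mono habsB hBK y
    rwa [gauge_closedBall zero_le_one, div_one] at this
  have hlower : ∀ y : Fin N → ℝ, (1 + ε)⁻¹ * ‖y‖ ≤ gauge K y := by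
    intro y
    have := gauge_mono habsK hKball y
    rw [gauge_closedBall hε1.le] at this
    calc (1 + ε)⁻¹ * ‖y‖ = ‖y‖ / (1 + ε) := by ring
    _ ≤ gauge K y := this
  refine ⟨?_, fun y => ⟨hlower y, hupper y⟩⟩
  intro x
  rcases eq_or_ne x 0 with rfl | hx
  · simp
  -- upper: gauge K (S₁ x) ≤ ‖x‖
  have hinj : Function.Injective S₁ := by
    intro a b hab
    have h1 := (h (a - b)).2
    rw [map_sub, hab, sub_self, norm_zero] at h1
    have : a - b = 0 := by
      rw [← norm_eq_zero]; exact le_antisymm h1 (norm_nonneg _)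
    exact sub_eq_zero.mp this
  obtain ⟨φ, hφnorm, hφx⟩ := exists_dual_vector ℝ x (norm_ne_zero_iff.mpr hx)
  set p := LinearMap.range S₁ with hp
  set e : E ≃ₗ[ℝ] p := LinearEquiv.ofInjective S₁ hinj with he
  have hcoe : ∀ u : E, ((e u : p) : Fin N → ℝ) = S₁ u := fun u => rfl
  have hScoe : ∀ z : p, S₁ (e.symm z) = (z : Fin N → ℝ) := by
    intro z
    rw [← hcoe, e.apply_symm_apply]
  have hbound : ∀ z : p, ‖(φ.toLinearMap.comp e.symm.toLinearMap) z‖ ≤ 1 * ‖z‖ := by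
    intro z
    have h1 : ‖φ (e.symm z)‖ ≤ ‖φ‖ * ‖e.symm z‖ := φ.le_opNorm _
    have h2 : ‖e.symm z‖ ≤ ‖S₁ (e.symm z)‖ := (h _).2
    rw [hScoe] at h2
    simp only [LinearMap.coe_comp, Function.comp_apply, ContinuousLinearMap.coe_coe,
      LinearEquiv.coe_coe, one_mul]
    calc ‖φ (e.symm z)‖ ≤ ‖φ‖ * ‖e.symm z‖ := h1
      _ = ‖e.symm z‖ := by rw [hφnorm, one_mul]
      _ ≤ ‖(z : Fin N → ℝ)‖ := h2
      _ = ‖z‖ := rfl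
  set f : p →L[ℝ] ℝ :=
    LinearMap.mkContinuous (φ.toLinearMap.comp e.symm.toLinearMap) 1 hbound with hf
  obtain ⟨g, hg_ext, hg_norm⟩ := exists_extension_norm_eq p f
  have hf_norm : ‖f‖ ≤ 1 := LinearMap.mkContinuous_norm_le _ zero_le_one _
  have hg1 : ‖g‖ ≤ 1 := hg_norm ▸ hf_norm
  have hgS : ∀ u : E, g (S₁ u) = φ u := by
    intro u
    have : g ((e u : p) : Fin N → ℝ) = f (e u) := hg_ext (e u)
    rw [hcoe] at this
    rw [this, hf]
    simp only [LinearMap.mkContinuous_apply, LinearMap.coe_comp, Function.comp_apply,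
      ContinuousLinearMap.coe_coe, LinearEquiv.coe_coe, e.symm_apply_apply]
  have hgK : ∀ y ∈ K, g y ≤ 1 := by
    intro y hy
    have hconv : Convex ℝ {y : Fin N → ℝ | g y ≤ 1} :=
      convex_halfSpace_le ⟨g.map_add, g.map_smul⟩ 1
    refine convexHull_min (Set.union_subset ?_ ?_) hconv hy
    · rintro _ ⟨u, hu, rfl⟩
      have hu' : ‖u‖ ≤ 1 := by simpa using hu
      have : g (S₁ u) = φ u := hgS u
      have h2 : φ u ≤ ‖φ u‖ := le_abs_self _
      have h3 : ‖φ u‖ ≤ ‖φ‖ * ‖u‖ := φ.le_opNorm _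
      simp only [Set.mem_setOf_eq, this]
      rw [hφnorm, one_mul] at h3
      linarith
    · intro z hz
      have hz' : ‖z‖ ≤ 1 := by simpa using hz
      have : g z ≤ ‖g z‖ := le_abs_self _
      have h3 : ‖g z‖ ≤ ‖g‖ * ‖z‖ := g.le_opNorm _
      have : g z ≤ ‖g‖ * ‖z‖ := le_trans this h3
      simp only [Set.mem_setOf_eq]
      nlinarith [norm_nonneg g, norm_nonneg z]
  have hxpos : (0:ℝ) < ‖x‖ := norm_pos_iff.mpr hx
  apply le_antisymm
  · -- gauge K (S₁ x) ≤ ‖x‖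
    apply gauge_le_of_mem (norm_nonneg x)
    rw [Set.mem_smul_set_iff_inv_smul_mem₀ (ne_of_gt hxpos)]
    have : (‖x‖⁻¹ : ℝ) • S₁ x = S₁ (‖x‖⁻¹ • x) := (map_smul S₁ _ _).symm
    rw [this]
    apply (subset_convexHull ℝ _)
    apply Set.mem_union_left
    refine ⟨‖x‖⁻¹ • x, ?_, rfl⟩
    simp [norm_smul, abs_of_pos (inv_pos.mpr hxpos), inv_mul_cancel₀ (ne_of_gt hxpos)]
  · -- ‖x‖ ≤ gauge K (S₁ x)
    rw [gauge_def]
    apply le_csInf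
    · refine ⟨‖S₁ x‖, ?_, ?_⟩
      · have := (h x).2
        exact Set.mem_Ioi.mpr (lt_of_lt_of_le hxpos this)
      · have hSpos : (0:ℝ) < ‖S₁ x‖ := lt_of_lt_of_le hxpos (h x).2
        rw [Set.mem_smul_set_iff_inv_smul_mem₀ (ne_of_gt hSpos)]
        apply hBK
        simp [norm_smul, abs_of_pos (inv_pos.mpr hSpos), inv_mul_cancel₀ (ne_of_gt hSpos)]
    · rintro r ⟨hr, hmem⟩
      obtain ⟨k, hk, hEq⟩ := hmem
      have hr0 : (0:ℝ) < r := hr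
      have : g (S₁ x) = r * g k := by rw [← hEq, map_smul, smul_eq_mul]
      have hgk : g k ≤ 1 := hgK k hk
      have : g (S₁ x) ≤ r := by
        rw [this]; nlinarith
      rw [hgS x, hφx] at this
      exact this
end

section
/- Every finite-dimensional normed space E embeds almost isometrically into some ℓ∞^N: for every ε > 0 there exist N ∈ ℕ and a linear map S : E → ℓ∞^N such that (1+ε)⁻¹‖Sx‖_∞ ≤ ‖x‖ ≤ ‖Sx‖_∞ for all x ∈ E. -/
/-- every finite-dimensional normed space embeds almost
isometrically into some ℓ∞^N. -/
theorem finiteDimensional_almost_isometric_embedding_linfty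
    (E : Type) [NormedAddCommGroup E] [NormedSpace ℝ E] [FiniteDimensional ℝ E]
    (ε : ℝ) (hε : 0 < ε) :
    ∃ (N : ℕ) (S : E →ₗ[ℝ] (Fin N → ℝ)),
      ∀ x : E, (1 + ε)⁻¹ * ‖S x‖ ≤ ‖x‖ ∧ ‖x‖ ≤ ‖S x‖ := by
  have h1ε : (0:ℝ) < 1 + ε := by linarith
  set δ : ℝ := ε / (1 + ε) with hδdef
  have hδ : 0 < δ := div_pos hε h1ε
  obtain ⟨t, hts, htf, hcov⟩ :=
    Metric.finite_approx_of_totallyBounded (isCompact_sphere (0:E) 1).totallyBounded δ hδ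
  set N := htf.toFinset.card with hN
  let e : Fin N → E := fun i => (htf.toFinset.equivFin.symm i : E)
  have he : ∀ i, e i ∈ t := fun i => htf.mem_toFinset.mp (htf.toFinset.equivFin.symm i).2
  have hne : ∀ i, e i ≠ 0 := by
    intro i
    have : e i ∈ Metric.sphere (0:E) 1 := hts (he i)
    simp only [mem_sphere_iff_norm, sub_zero] at this
    intro h; rw [h] at this; simp at this
  let g : Fin N → (E →L[ℝ] ℝ) := fun i => Classical.choose (exists_dual_vector ℝ (e i) (norm_ne_zero_iff.mpr (hne i)))
  have hg : ∀ i, ‖g i‖ = 1 ∧ (g i) (e i) = (‖e i‖ : ℝ) := fun i =>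
    Classical.choose_spec (exists_dual_vector ℝ (e i) (norm_ne_zero_iff.mpr (hne i)))
  let S : E →ₗ[ℝ] Fin N → ℝ := LinearMap.pi fun i => (1 + ε) • (g i).toLinearMap
  refine ⟨N, S, fun x => ?_⟩
  have hSx : ∀ i, S x i = (1 + ε) * g i x := fun i => rfl
  have hupper : ‖S x‖ ≤ (1 + ε) * ‖x‖ := by
    rcases Nat.eq_zero_or_pos N with h0 | hNpos
    · have hz : S x = 0 := funext fun i => absurd i.2 (by omega)
      rw [hz, norm_zero]; positivity
    · apply pi_norm_le_iff_of_nonneg (by positivity) |>.mpr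
      intro i
      rw [hSx i, norm_mul, Real.norm_eq_abs (1+ε), abs_of_pos h1ε]
      have := (g i).le_opNorm x
      rw [(hg i).1, one_mul] at this
      exact mul_le_mul_of_nonneg_left this (le_of_lt h1ε)
  constructor
  · rw [inv_mul_le_iff₀ h1ε]; exact hupper
  · rcases eq_or_ne x 0 with rfl | hx
    · simp
    · -- lower bound
      have hxn : (0:ℝ) < ‖x‖ := norm_pos_iff.mpr hx
      set u := ‖x‖⁻¹ • x with hu
      have hun : u ∈ Metric.sphere (0:E) 1 := by
        simp [hu, norm_smul, abs_of_pos (inv_pos.mpr hxn), inv_mul_cancel₀ hxn.ne']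
      obtain ⟨y, hy, hyu⟩ := Set.mem_iUnion₂.mp (hcov hun)
      obtain ⟨j, hj⟩ : ∃ j : Fin N, e j = y := by
        have : y ∈ htf.toFinset := htf.mem_toFinset.mpr hy
        exact ⟨htf.toFinset.equivFin ⟨y, this⟩, by simp [e]⟩
      have hyn : ‖y‖ = 1 := by
        have := hts hy; simpa [mem_sphere_iff_norm] using this
      have hdist : ‖u - y‖ < δ := by
        rw [Metric.mem_ball, dist_eq_norm] at hyu; exact hyu
      -- g j u ≥ 1 - δ
      have hgju : 1 - δ ≤ g j u := by
        have h1 : g j y = 1 := by rw [← hj] at hyn ⊢; rw [(hg j).2, hyn]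
        have h2 : |g j (u - y)| ≤ δ := by
          have := (g j).le_opNorm (u - y)
          rw [(hg j).1, one_mul] at this
          calc |g j (u - y)| = ‖g j (u - y)‖ := rfl
            _ ≤ ‖u - y‖ := this
            _ ≤ δ := le_of_lt hdist
        have h3 : g j u = g j y + g j (u - y) := by rw [← map_add, add_sub_cancel]
        have := neg_le_of_abs_le h2
        rw [h3, h1]; linarith
      have key : ‖x‖ ≤ S x j := by
        have hux : x = ‖x‖ • u := by
          rw [hu, smul_smul, mul_inv_cancel₀ hxn.ne', one_smul]
        have : S x j = (1 + ε) * (‖x‖ * g j u) := by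
          rw [hSx j]
          congr 1
          conv_lhs => rw [hux]
          rw [map_smul, smul_eq_mul]
        rw [this]
        have hδval : (1 + ε) * (1 - δ) = 1 := by
          rw [hδdef]; field_simp; ring
        calc ‖x‖ = ((1 + ε) * (1 - δ)) * ‖x‖ := by rw [hδval, one_mul]
          _ = (1 + ε) * (‖x‖ * (1 - δ)) := by ring
          _ ≤ (1 + ε) * (‖x‖ * g j u) := by
              apply mul_le_mul_of_nonneg_left _ (le_of_lt h1ε)
              exact mul_le_mul_of_nonneg_left hgju (le_of_lt hxn)
      calc ‖x‖ ≤ S x j := key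
        _ ≤ |S x j| := le_abs_self _
        _ = ‖S x j‖ := rfl
        _ ≤ ‖S x‖ := norm_le_pi_norm (S x) j
end

section
/- Suppose the closed unit ball of a Banach space X has the property that any four pairwise intersecting open balls of radius 1 have a common point. Then any four pairwise intersecting open balls (of arbitrary positive radii) in X have a common point. -/
private lemma four_ball_aux
    (X : Type) [NormedAddCommGroup X] [NormedSpace ℝ X]
    (hscale : ∀ ρ : ℝ, 0 < ρ → ∀ w : Fin 4 → X,
      (∀ i j, ‖w i - w j‖ < 2 * ρ) → ∃ q : X, ∀ i, ‖q - w i‖ < ρ)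
    (a : Fin 4 → X) (b : Fin 4 → ℝ) (κ : ℝ) (hκ : 0 < κ)
    (hb : ∀ i, 2 * κ ≤ b i)
    (hab : ∀ i j, ‖a i - a j‖ ≤ b i + b j - 2 * κ) :
    ∃ y : X, ∀ i, ‖y - a i‖ < b i + κ := by
  have hne : (Finset.univ : Finset (Fin 4)).Nonempty := ⟨0, Finset.mem_univ 0⟩
  set s := (Finset.univ : Finset (Fin 4)).inf' hne b with hs
  set R := (Finset.univ : Finset (Fin 4)).sup' hne b with hR
  obtain ⟨i₀, -, hi₀⟩ := Finset.exists_mem_eq_inf' hne b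
  have hsle : ∀ i, s ≤ b i := fun i => Finset.inf'_le b (Finset.mem_univ i)
  have hleR : ∀ i, b i ≤ R := fun i => Finset.le_sup' b (Finset.mem_univ i)
  have hκs : 2 * κ ≤ s := by rw [hs, hi₀]; exact hb i₀
  have hspos : 0 < s := by linarith
  have hsR : s ≤ R := le_trans (hsle 0) (hleR 0)
  have hRpos : 0 < R := lt_of_lt_of_le hspos hsR
  -- the key improvement step
  have key : ∀ δ : ℝ, 0 < δ → ∀ y : X, (∀ i, ‖y - a i‖ < b i + δ) →
      ∃ q : X, ∀ i, ‖q - a i‖ < b i + (δ - (s + δ) * (2 * δ + κ) / (2 * (R + δ))) := by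
    intro δ hδ y hy
    have hbδ : ∀ i, 0 < b i + δ := fun i => by have := hb i; linarith
    have hRδ : 0 < R + δ := by linarith
    set c := s + δ with hc
    have hcpos : 0 < c := by simp only [hc]; linarith
    set γ : Fin 4 → ℝ := fun i => c / (b i + δ) with hγ
    have hγpos : ∀ i, 0 < γ i := fun i => div_pos hcpos (hbδ i)
    have hγle : ∀ i, γ i ≤ 1 := fun i => by
      rw [hγ]
      rw [div_le_one (hbδ i)]
      have := hsle i
      simp only [hc]; linarith
    have hγmul : ∀ i, γ i * (b i + δ) = c := fun i => by
      rw [hγ]; exact div_mul_cancel₀ c (hbδ i).ne'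
    set z : Fin 4 → X := fun i => y + γ i • (a i - y) with hz
    set ρ := c * (2 * R - κ) / (2 * (R + δ)) with hρ
    have hρpos : 0 < ρ := by
      apply div_pos
      · apply mul_pos hcpos; linarith
      · linarith
    have pair : ∀ i j, b i ≤ b j → ‖z i - z j‖ < 2 * ρ := by
      intro i j hij
      have hγji : γ j ≤ γ i := by
        rw [hγ]; dsimp only
        rw [div_le_div_iff₀ (hbδ j) (hbδ i)]
        nlinarith [mul_nonneg hcpos.le (by linarith : (0:ℝ) ≤ b j - b i)]
      have hzz : z i - z j = γ j • (a i - a j) + (γ i - γ j) • (a i - y) := by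
        simp only [hz]; module
      have hay : ‖a i - y‖ ≤ b i + δ := by
        rw [norm_sub_rev]; exact (hy i).le
      have hbound : ‖z i - z j‖ ≤ c * (2 * b j - 2 * κ) / (b j + δ) := by
        calc ‖z i - z j‖ ≤ ‖γ j • (a i - a j)‖ + ‖(γ i - γ j) • (a i - y)‖ := by
              rw [hzz]; exact norm_add_le _ _
          _ = γ j * ‖a i - a j‖ + (γ i - γ j) * ‖a i - y‖ := by
              rw [norm_smul, norm_smul, Real.norm_eq_abs, Real.norm_eq_abs,
                abs_of_pos (hγpos j), abs_of_nonneg (by linarith : (0:ℝ) ≤ γ i - γ j)]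
          _ ≤ γ j * (b i + b j - 2 * κ) + (γ i - γ j) * (b i + δ) :=
              add_le_add (mul_le_mul_of_nonneg_left (hab i j) (hγpos j).le)
                (mul_le_mul_of_nonneg_left hay (by linarith))
          _ = c * (2 * b j - 2 * κ) / (b j + δ) := by
              rw [hγ]; dsimp only
              field_simp [(hbδ i).ne', (hbδ j).ne']
              ring
      have hlt : c * (2 * b j - 2 * κ) / (b j + δ) < 2 * ρ := by
        have h2ρ : 2 * ρ = c * (2 * R - κ) / (R + δ) := by
          rw [hρ]; field_simp
        rw [h2ρ, div_lt_div_iff₀ (hbδ j) hRδ]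
        nlinarith [mul_nonneg (mul_nonneg hcpos.le hδ.le) (sub_nonneg.2 (hleR j)),
          mul_nonneg (mul_nonneg hcpos.le hκ.le) (sub_nonneg.2 (hleR j)),
          mul_pos (mul_pos hcpos hκ) hRpos, mul_pos (mul_pos hcpos hκ) hδ]
      exact lt_of_le_of_lt hbound hlt
    have pairall : ∀ i j, ‖z i - z j‖ < 2 * ρ := by
      intro i j
      rcases le_total (b i) (b j) with hij | hij
      · exact pair i j hij
      · rw [norm_sub_rev]; exact pair j i hij
    obtain ⟨q, hq⟩ := hscale ρ hρpos z pairall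
    refine ⟨q, fun i => ?_⟩
    have hzi : z i - a i = (1 - γ i) • (y - a i) := by
      simp only [hz]; module
    have h1' : ‖z i - a i‖ ≤ (1 - γ i) * (b i + δ) := by
      rw [hzi, norm_smul, Real.norm_eq_abs, abs_of_nonneg (by linarith [hγle i] : (0:ℝ) ≤ 1 - γ i)]
      exact mul_le_mul_of_nonneg_left (hy i).le (by linarith [hγle i])
    have h2' : (1 - γ i) * (b i + δ) = b i + δ - c := by
      have hexp : (1 - γ i) * (b i + δ) = (b i + δ) - γ i * (b i + δ) := by ring
      rw [hexp, hγmul i]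
    have hcρ : c - ρ = (s + δ) * (2 * δ + κ) / (2 * (R + δ)) := by
      rw [hρ, hc]; field_simp; ring
    calc ‖q - a i‖ ≤ ‖q - z i‖ + ‖z i - a i‖ := by
          have hsplit : q - a i = (q - z i) + (z i - a i) := by abel
          rw [hsplit]; exact norm_add_le _ _
      _ < ρ + (b i + δ - c) := add_lt_add_of_lt_of_le (hq i) (h1'.trans_eq h2')
      _ ≤ b i + (δ - (s + δ) * (2 * δ + κ) / (2 * (R + δ))) := by linarith [hcρ]
  -- fixed drift
  set Δ := s * κ / (4 * R) with hΔ
  have hΔpos : 0 < Δ := div_pos (mul_pos hspos hκ) (by linarith)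
  have step : ∀ δ : ℝ, 0 < δ → δ ≤ R → ∀ y : X, (∀ i, ‖y - a i‖ < b i + δ) →
      ∃ q, ∀ i, ‖q - a i‖ < b i + max (δ - Δ) κ := by
    intro δ hδ hδR y hy
    obtain ⟨q, hq⟩ := key δ hδ y hy
    refine ⟨q, fun i => lt_of_lt_of_le (hq i) ?_⟩
    have hdrift : Δ ≤ (s + δ) * (2 * δ + κ) / (2 * (R + δ)) := by
      rw [hΔ, div_le_div_iff₀ (by linarith) (by linarith)]
      nlinarith [mul_pos (mul_pos hRpos hspos) hδ,
        mul_nonneg (mul_nonneg (sub_nonneg.2 hsR) hκ.le) hδ.le,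
        mul_nonneg (mul_nonneg hRpos.le hδ.le) hδ.le,
        mul_nonneg (mul_nonneg hRpos.le hκ.le) hδ.le]
    have hmax := le_max_left (δ - Δ) κ
    linarith
  have init : ∃ y, ∀ i, ‖y - a i‖ < b i + R := by
    obtain ⟨q, hq⟩ := hscale (R - κ / 2) (by linarith) a
      (fun i j => by have := hab i j; have := hleR i; have := hleR j; linarith)
    exact ⟨q, fun i => by have := hq i; have := hb i; linarith⟩
  have iter : ∀ n : ℕ, ∃ y, ∀ i, ‖y - a i‖ < b i + max (R - n * Δ) κ := by
    intro n
    induction n with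
    | zero =>
      obtain ⟨y, hy⟩ := init
      refine ⟨y, fun i => lt_of_lt_of_le (hy i) ?_⟩
      simp only [Nat.cast_zero, zero_mul, sub_zero]
      exact add_le_add le_rfl (le_max_left _ _)
    | succ n ih =>
      obtain ⟨y, hy⟩ := ih
      have hd1 : 0 < max (R - n * Δ) κ := lt_of_lt_of_le hκ (le_max_right _ _)
      have hd2 : max (R - n * Δ) κ ≤ R := by
        refine max_le ?_ (by linarith)
        have : (0:ℝ) ≤ (n : ℝ) * Δ := mul_nonneg (Nat.cast_nonneg n) hΔpos.le
        linarith
      obtain ⟨q, hq⟩ := step _ hd1 hd2 y hy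
      refine ⟨q, fun i => lt_of_lt_of_le (hq i) ?_⟩
      have hmono : max (R - n * Δ) κ - Δ ≤ max (R - (n + 1 : ℕ) * Δ) κ := by
        rcases le_total (R - n * Δ) κ with hcase | hcase
        · rw [max_eq_right hcase]
          exact le_trans (by linarith) (le_max_right _ _)
        · rw [max_eq_left hcase]
          refine le_trans ?_ (le_max_left _ _)
          push_cast; linarith
      have h' : max (max (R - n * Δ) κ - Δ) κ ≤ max (R - (n + 1 : ℕ) * Δ) κ :=
        max_le hmono (le_max_right _ _)
      linarith
  obtain ⟨n, hn⟩ := exists_nat_ge (R / Δ)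
  obtain ⟨y, hy⟩ := iter n
  have hRn : R - n * Δ ≤ κ := by
    have : R ≤ n * Δ := by
      rw [div_le_iff₀ hΔpos] at hn; linarith
    linarith
  refine ⟨y, fun i => ?_⟩
  have hfin := hy i
  rw [max_eq_right hRn] at hfin
  exact hfin

/-- if in a Banach space X any four pairwise intersecting open
balls of radius 1 have a common point, then any four pairwise intersecting
open balls of arbitrary positive radii have a common point. -/
theorem four_ball_property_radius_one_suffices
    (X : Type) [NormedAddCommGroup X] [NormedSpace ℝ X] [CompleteSpace X]
    (h1 : ∀ x : Fin 4 → X, (∀ i j, ‖x i - x j‖ < 2) →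
      (⋂ i : Fin 4, Metric.ball (x i) 1).Nonempty)
    (x : Fin 4 → X) (r : Fin 4 → ℝ) (hr : ∀ i, 0 < r i)
    (h : ∀ i j, ‖x i - x j‖ < r i + r j) :
    (⋂ i : Fin 4, Metric.ball (x i) (r i)).Nonempty := by
  have hscale : ∀ ρ : ℝ, 0 < ρ → ∀ w : Fin 4 → X,
      (∀ i j, ‖w i - w j‖ < 2 * ρ) → ∃ q : X, ∀ i, ‖q - w i‖ < ρ := by
    intro ρ hρ w hw
    have h2 : ∀ i j, ‖(ρ⁻¹ • w i) - (ρ⁻¹ • w j)‖ < 2 := by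
      intro i j
      rw [← smul_sub, norm_smul, Real.norm_eq_abs, abs_inv, abs_of_pos hρ]
      calc ρ⁻¹ * ‖w i - w j‖ < ρ⁻¹ * (2 * ρ) :=
            mul_lt_mul_of_pos_left (hw i j) (inv_pos.mpr hρ)
        _ = 2 := by field_simp
    obtain ⟨p, hp⟩ := h1 (fun i => ρ⁻¹ • w i) h2
    simp only [Set.mem_iInter, Metric.mem_ball, dist_eq_norm] at hp
    refine ⟨ρ • p, fun i => ?_⟩
    have hre : ρ • p - w i = ρ • (p - ρ⁻¹ • w i) := by
      rw [smul_sub, smul_inv_smul₀ hρ.ne']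
    rw [hre, norm_smul, Real.norm_eq_abs, abs_of_pos hρ]
    calc ρ * ‖p - ρ⁻¹ • w i‖ < ρ * 1 := mul_lt_mul_of_pos_left (hp i) hρ
      _ = ρ := mul_one ρ
  obtain ⟨ε, hεpos, hε⟩ : ∃ ε, 0 < ε ∧ ∀ i j, ‖x i - x j‖ ≤ r i + r j - ε := by
    refine ⟨(Finset.univ : Finset (Fin 4 × Fin 4)).inf' Finset.univ_nonempty
      (fun p => r p.1 + r p.2 - ‖x p.1 - x p.2‖), ?_, ?_⟩
    · rw [Finset.lt_inf'_iff]
      rintro ⟨i, j⟩ -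
      have := h i j
      dsimp only
      linarith
    · intro i j
      have := Finset.inf'_le (fun p : Fin 4 × Fin 4 => r p.1 + r p.2 - ‖x p.1 - x p.2‖)
        (Finset.mem_univ (i, j))
      dsimp only at this
      linarith
  have hne : (Finset.univ : Finset (Fin 4)).Nonempty := ⟨0, Finset.mem_univ 0⟩
  set m := (Finset.univ : Finset (Fin 4)).inf' hne r with hm
  obtain ⟨i₀, -, hi₀⟩ := Finset.exists_mem_eq_inf' hne r
  have hm_le : ∀ i, m ≤ r i := fun i => Finset.inf'_le r (Finset.mem_univ i)
  have hmpos : 0 < m := by rw [hm, hi₀]; exact hr i₀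
  set κ := min (ε / 6) (m / 4) with hκdef
  have hκpos : 0 < κ := lt_min (by linarith) (by linarith)
  have hκε : κ ≤ ε / 6 := min_le_left _ _
  have hκm : κ ≤ m / 4 := min_le_right _ _
  obtain ⟨y, hy⟩ := four_ball_aux X hscale x (fun i => r i - 2 * κ) κ hκpos
    (fun i => by have := hm_le i; linarith)
    (fun i j => by have := hε i j; linarith)
  refine ⟨y, Set.mem_iInter.mpr fun i => ?_⟩
  rw [Metric.mem_ball, dist_eq_norm]
  have := hy i
  linarith
end

section
/- In any separable Banach space X, the set of smooth points of the unit sphere is dense in the unit sphere (Mazur's theorem). -/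
open Set

section MazurAux
variable {X : Type} [NormedAddCommGroup X] [NormedSpace ℝ X]

/-- Slope of `t ↦ ‖y + t • v‖` at `0`. -/
noncomputable def msl (y v : X) (t : ℝ) : ℝ := (‖y + t • v‖ - ‖y‖) / t

/-- Right directional derivative of the norm at `y` in direction `v`. -/
noncomputable def mDp (y v : X) : ℝ := sInf (msl y v '' Ioi 0)

/-- Left directional derivative of the norm at `y` in direction `v`. -/
noncomputable def mDm (y v : X) : ℝ := sSup (msl y v '' Iio 0)

lemma msl_abs_le (y v : X) {t : ℝ} (ht : t ≠ 0) : |msl y v t| ≤ ‖v‖ := by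
  have h1 : |‖y + t • v‖ - ‖y‖| ≤ ‖t • v‖ := by
    simpa using abs_norm_sub_norm_le (y + t • v) y
  have h2 : ‖t • v‖ = |t| * ‖v‖ := by rw [norm_smul, Real.norm_eq_abs]
  rw [msl, abs_div]
  rw [div_le_iff₀ (abs_pos.2 ht)]
  calc |‖y + t • v‖ - ‖y‖| ≤ |t| * ‖v‖ := h2 ▸ h1
    _ = ‖v‖ * |t| := mul_comm _ _

lemma mnorm_convexOn (y v : X) : ConvexOn ℝ univ (fun t : ℝ => ‖y + t • v‖) := by
  refine ⟨convex_univ, fun s _ t _ a b ha hb hab => ?_⟩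
  have hb1 : b = 1 - a := by linarith
  subst hb1
  have key : y + (a * s + (1 - a) * t) • v
      = a • (y + s • v) + (1 - a) • (y + t • v) := by module
  simp only [smul_eq_mul]
  rw [key]
  calc ‖a • (y + s • v) + (1 - a) • (y + t • v)‖
      ≤ ‖a • (y + s • v)‖ + ‖(1 - a) • (y + t • v)‖ := norm_add_le _ _
    _ = a * ‖y + s • v‖ + (1 - a) * ‖y + t • v‖ := by
        rw [norm_smul, norm_smul, Real.norm_eq_abs, Real.norm_eq_abs,
          abs_of_nonneg ha, abs_of_nonneg hb]

lemma msl_mono (y v : X) {t₁ t₂ : ℝ} (h1 : t₁ ≠ 0) (h2 : t₂ ≠ 0) (h : t₁ ≤ t₂) :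
    msl y v t₁ ≤ msl y v t₂ := by
  have := (mnorm_convexOn y v).secant_mono (a := 0) (x := t₁) (y := t₂)
    (mem_univ _) (mem_univ _) (mem_univ _) h1 h2 h
  simpa [msl] using this


lemma mDp_nonempty (y v : X) : (msl y v '' Ioi 0).Nonempty := ⟨_, ⟨1, by norm_num, rfl⟩⟩
lemma mDm_nonempty (y v : X) : (msl y v '' Iio 0).Nonempty := ⟨_, ⟨-1, by norm_num, rfl⟩⟩

lemma mDp_bddBelow (y v : X) : BddBelow (msl y v '' Ioi 0) := by
  refine ⟨-‖v‖, ?_⟩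
  rintro s ⟨t, ht, rfl⟩
  exact neg_le_of_abs_le (msl_abs_le y v (ne_of_gt ht))

lemma mDm_bddAbove (y v : X) : BddAbove (msl y v '' Iio 0) := by
  refine ⟨‖v‖, ?_⟩
  rintro s ⟨t, ht, rfl⟩
  exact le_of_abs_le (msl_abs_le y v (ne_of_lt ht))

lemma mDp_le_msl (y v : X) {t : ℝ} (ht : 0 < t) : mDp y v ≤ msl y v t :=
  csInf_le (mDp_bddBelow y v) ⟨t, ht, rfl⟩

lemma msl_le_mDm (y v : X) {t : ℝ} (ht : t < 0) : msl y v t ≤ mDm y v :=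
  le_csSup (mDm_bddAbove y v) ⟨t, ht, rfl⟩

lemma le_mDp (y v : X) {c : ℝ} (h : ∀ t, 0 < t → c ≤ msl y v t) : c ≤ mDp y v :=
  le_csInf (mDp_nonempty y v) (by rintro s ⟨t, ht, rfl⟩; exact h t ht)

lemma mDm_le (y v : X) {c : ℝ} (h : ∀ t, t < 0 → msl y v t ≤ c) : mDm y v ≤ c :=
  csSup_le (mDm_nonempty y v) (by rintro s ⟨t, ht, rfl⟩; exact h t ht)

lemma mDm_le_mDp (y v : X) : mDm y v ≤ mDp y v := by
  refine le_mDp y v fun t ht => mDm_le y v fun t' ht' =>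
    msl_mono y v (ne_of_lt ht') (ne_of_gt ht) (le_of_lt (ht'.trans ht))

lemma mDp_le_norm (y v : X) : mDp y v ≤ ‖v‖ :=
  (mDp_le_msl y v one_pos).trans (le_of_abs_le (msl_abs_le y v one_ne_zero))

lemma neg_norm_le_mDm (y v : X) : -‖v‖ ≤ mDm y v :=
  (neg_le_of_abs_le (msl_abs_le y v (by norm_num : (-1:ℝ) ≠ 0))).trans
    (msl_le_mDm y v (by norm_num))

lemma msl_shift (y v : X) {u : ℝ} (hu : u ≠ 0) : msl y v u = msl (y + u • v) v (-u) := by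
  have h : y + u • v + (-u) • v = y := by module
  rw [msl, msl, h]
  rw [div_neg]
  ring_nf

lemma mDp_le_mDm_shift (y v : X) {u : ℝ} (hu : 0 < u) :
    mDp y v ≤ mDm (y + u • v) v := by
  calc mDp y v ≤ msl y v u := mDp_le_msl y v hu
    _ = msl (y + u • v) v (-u) := msl_shift y v (ne_of_gt hu)
    _ ≤ mDm (y + u • v) v := msl_le_mDm _ v (neg_neg_iff_pos.2 hu)

lemma msl_scale (y v : X) {c t : ℝ} (hc : 0 < c) (ht : t ≠ 0) :
    msl (c • y) v (c * t) = msl y v t := by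
  have h : c • y + (c * t) • v = c • (y + t • v) := by module
  rw [msl, msl, h, norm_smul, norm_smul, Real.norm_eq_abs, abs_of_pos hc]
  rw [← mul_sub]
  rw [mul_div_mul_left _ _ (ne_of_gt hc)]

lemma mDp_scale (y v : X) {c : ℝ} (hc : 0 < c) : mDp (c • y) v = mDp y v := by
  have key : ∀ (c : ℝ), 0 < c → ∀ y : X, mDp (c • y) v ≤ mDp y v := by
    intro c hc y
    refine le_csInf (mDp_nonempty y v) ?_
    rintro s ⟨t, ht, rfl⟩
    exact (mDp_le_msl (c • y) v (mul_pos hc ht)).trans_eq (msl_scale y v hc (ne_of_gt ht))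
  refine le_antisymm (key c hc y) ?_
  have := key c⁻¹ (inv_pos.2 hc) (c • y)
  rwa [inv_smul_smul₀ (ne_of_gt hc)] at this

lemma mDm_scale (y v : X) {c : ℝ} (hc : 0 < c) : mDm (c • y) v = mDm y v := by
  have key : ∀ (c : ℝ), 0 < c → ∀ y : X, mDm y v ≤ mDm (c • y) v := by
    intro c hc y
    refine csSup_le (mDm_nonempty y v) ?_
    rintro s ⟨t, ht, rfl⟩
    have : msl (c • y) v (c * t) = msl y v t := msl_scale y v hc (ne_of_lt ht)
    exact this ▸ msl_le_mDm (c • y) v (mul_neg_of_pos_of_neg hc ht)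
  refine le_antisymm ?_ (key c hc y)
  have := key c⁻¹ (inv_pos.2 hc) (c • y)
  rwa [inv_smul_smul₀ (ne_of_gt hc)] at this

/-- a norming functional's value lies between the one-sided derivatives -/
lemma support_bounds (y v : X) (f : X →L[ℝ] ℝ) (hf : ∀ w, f w ≤ ‖w‖) (hfy : f y = ‖y‖) :
    mDm y v ≤ f v ∧ f v ≤ mDp y v := by
  constructor
  · refine mDm_le y v fun t ht => ?_
    have h1 : f (y + t • v) ≤ ‖y + t • v‖ := hf _
    rw [map_add, map_smul, hfy] at h1
    rw [msl, div_le_iff_of_neg ht]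
    have h2 : ‖y‖ + t * f v ≤ ‖y + t • v‖ := by simpa [smul_eq_mul] using h1
    linarith
  · refine le_mDp y v fun t ht => ?_
    have h1 : f (y + t • v) ≤ ‖y + t • v‖ := hf _
    rw [map_add, map_smul, hfy] at h1
    rw [msl, le_div_iff₀ ht]
    have h2 : ‖y‖ + t * f v ≤ ‖y + t • v‖ := by simpa [smul_eq_mul] using h1
    linarith

lemma msl_continuous (v : X) (t : ℝ) : Continuous (fun y : X => msl y v t) := by
  unfold msl
  fun_prop

lemma jump_set_open (v : X) (ε : ℝ) : IsOpen {y : X | mDp y v - mDm y v < ε} := by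
  rw [isOpen_iff_mem_nhds]
  intro y hy
  simp only [mem_setOf_eq] at hy
  have h1 : mDp y v < mDm y v + ε := by linarith
  obtain ⟨s, ⟨t, ht, rfl⟩, hs⟩ := exists_lt_of_csInf_lt (mDp_nonempty y v) h1
  have h2 : msl y v t - ε < mDm y v := by linarith
  obtain ⟨s', ⟨t', ht', rfl⟩, hs'⟩ := exists_lt_of_lt_csSup (mDm_nonempty y v) h2
  have hV : IsOpen {z : X | msl z v t - msl z v t' < ε} :=
    isOpen_lt (by continuity) continuous_const
  refine Filter.mem_of_superset (hV.mem_nhds (by simp only [mem_setOf_eq]; linarith)) ?_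
  intro z hz
  simp only [mem_setOf_eq] at hz ⊢
  have := mDp_le_msl z v ht
  have := msl_le_mDm z v ht'
  linarith

lemma jump_set_dense (v : X) {ε : ℝ} (hε : 0 < ε) :
    Dense {y : X | mDp y v - mDm y v < ε} := by
  rw [Metric.dense_iff]
  intro x r hr
  rcases eq_or_ne v 0 with rfl | hv
  · refine ⟨x, Metric.mem_ball_self hr, ?_⟩
    simp only [mem_setOf_eq]
    have h1 := mDp_le_norm x (0 : X)
    have h2 := neg_norm_le_mDm x (0 : X)
    simp only [norm_zero] at h1 h2
    linarith
  · have hv' : 0 < ‖v‖ := norm_pos_iff.2 hv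
    obtain ⟨N, hN⟩ := exists_nat_gt (2 * ‖v‖ / ε)
    have hN0 : 0 < (N : ℝ) := lt_of_le_of_lt (by positivity) hN
    have hN1 : 1 ≤ N := by exact_mod_cast Nat.one_le_iff_ne_zero.2 (by
      rintro rfl; simp at hN0)
    have hNε : 2 * ‖v‖ < N * ε := by
      rw [div_lt_iff₀ hε] at hN; linarith
    set r' : ℝ := r / (2 * N * ‖v‖) with hr'
    have hr'0 : 0 < r' := by positivity
    set w : ℕ → X := fun i => x + ((i : ℝ) * r') • v with hw
    have chain : ∀ i : ℕ, mDp (w i) v ≤ mDm (w (i + 1)) v := by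
      intro i
      have h : w (i + 1) = w i + r' • v := by
        simp only [hw]
        push_cast
        module
      rw [h]
      exact mDp_le_mDm_shift _ v hr'0
    by_contra hcon
    rw [Set.not_nonempty_iff_eq_empty, Set.eq_empty_iff_forall_notMem] at hcon
    have H : ∀ i : ℕ, 1 ≤ i → i ≤ N → ε ≤ mDp (w i) v - mDm (w i) v := by
      intro i h1 h2
      have hball : w i ∈ Metric.ball x r := by
        rw [Metric.mem_ball, dist_eq_norm]
        have heq : w i - x = ((i : ℝ) * r') • v := by simp [hw]
        rw [heq, norm_smul, Real.norm_eq_abs, abs_of_pos (by positivity)]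
        have hiN : (i : ℝ) ≤ N := by exact_mod_cast h2
        calc (i : ℝ) * r' * ‖v‖ ≤ (N : ℝ) * r' * ‖v‖ := by
              apply mul_le_mul_of_nonneg_right (mul_le_mul_of_nonneg_right hiN hr'0.le) hv'.le
          _ = r / 2 := by rw [hr']; field_simp
          _ < r := by linarith
      by_contra hlt
      push_neg at hlt
      exact hcon (w i) ⟨hball, by simp only [mem_setOf_eq]; linarith⟩
    have grow : ∀ n : ℕ, 1 ≤ n → n ≤ N → mDm (w 1) v + ((n : ℝ) - 1) * ε ≤ mDm (w n) v := by
      intro n hn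
      induction n, hn using Nat.le_induction with
      | base => intro _; simp
      | succ m hm1 ih =>
        intro hm
        have hmN : m ≤ N := by omega
        have h1 := ih hmN
        have h2 := H m hm1 hmN
        have h3 := chain m
        push_cast
        linarith
    have hend := grow N hN1 le_rfl
    have hjN := H N hN1 le_rfl
    have hub := mDp_le_norm (w N) v
    have hlb := neg_norm_le_mDm (w 1) v
    linarith


end MazurAux

/-- Mazur: in a separable Banach space, the smooth points of the
unit sphere are dense in the unit sphere. -/
theorem mazur_smooth_points_dense
    (X : Type) [NormedAddCommGroup X] [NormedSpace ℝ X] [CompleteSpace X]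
    [TopologicalSpace.SeparableSpace X]
    (x : X) (hx : ‖x‖ = 1) (δ : ℝ) (hδ : 0 < δ) :
    ∃ y : X, ‖y‖ = 1 ∧ ‖x - y‖ < δ ∧
      ∃! f : X →L[ℝ] ℝ, ‖f‖ = 1 ∧ f y = 1 := by
  have : Nonempty X := ⟨x⟩
  obtain ⟨u, hu⟩ := TopologicalSpace.exists_dense_seq X
  -- the Baire residual set
  set G : Set X := ⋂ p : ℕ × ℕ, {y : X | mDp y (u p.1) - mDm y (u p.1) < 1 / (p.2 + 1)}
    with hG
  have hGdense : Dense G := by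
    refine dense_iInter_of_isOpen (fun p => jump_set_open _ _) (fun p => ?_)
    exact jump_set_dense _ (by positivity)
  -- pick y' ∈ G close to x
  set ρ : ℝ := min (δ / 2) (1 / 2) with hρ
  have hρ0 : 0 < ρ := by positivity
  obtain ⟨y', hy'ball, hy'G⟩ := (Metric.dense_iff.1 hGdense) x ρ hρ0
  have hxy' : ‖x - y'‖ < ρ := by
    rw [← dist_eq_norm, dist_comm]
    exact hy'ball
  have hy'norm : (0:ℝ) < ‖y'‖ := by
    have h1 : ‖x‖ - ‖x - y'‖ ≤ ‖y'‖ := by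
      have := norm_sub_norm_le x y'  -- ‖x‖ - ‖y'‖ ≤ ‖x - y'‖
      linarith
    have h2 : ρ ≤ 1 / 2 := min_le_right _ _
    linarith [hx ▸ h1]
  set y : X := ‖y'‖⁻¹ • y' with hy
  have hynorm : ‖y‖ = 1 := by
    rw [hy, norm_smul, Real.norm_eq_abs, abs_of_pos (inv_pos.2 hy'norm),
      inv_mul_cancel₀ (ne_of_gt hy'norm)]
  have hclose : ‖x - y‖ < δ := by
    have h1 : ‖y' - y‖ = |‖y'‖ - 1| := by
      have heq : y' - y = (1 - ‖y'‖⁻¹) • y' := by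
        rw [hy, sub_smul, one_smul]
      rw [heq, norm_smul, Real.norm_eq_abs, ← abs_of_pos hy'norm, ← abs_mul]
      congr 1
      field_simp
      rw [abs_of_pos hy'norm]; ring
    have h2 : |‖y'‖ - 1| ≤ ‖x - y'‖ := by
      rw [← hx]
      have := abs_norm_sub_norm_le y' x
      rwa [← norm_neg (y' - x), neg_sub] at this
    have h3 : ‖x - y‖ ≤ ‖x - y'‖ + ‖y' - y‖ := by
      have : x - y = (x - y') + (y' - y) := by abel
      rw [this]; exact norm_add_le _ _
    have h4 : ρ ≤ δ / 2 := min_le_left _ _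
    linarith
  -- smoothness: at y the one-sided derivatives agree in all directions u n
  have hsmooth : ∀ n : ℕ, mDp y (u n) = mDm y (u n) := by
    intro n
    have hscale : mDp y (u n) = mDp y' (u n) ∧ mDm y (u n) = mDm y' (u n) := by
      constructor
      · rw [hy]; exact mDp_scale y' (u n) (inv_pos.2 hy'norm)
      · rw [hy]; exact mDm_scale y' (u n) (inv_pos.2 hy'norm)
    have hle : mDp y' (u n) - mDm y' (u n) ≤ 0 := by
      by_contra hpos
      push_neg at hpos
      obtain ⟨k, hk⟩ := exists_nat_one_div_lt hpos
      have := mem_iInter.1 hy'G (n, k)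
      simp only [mem_setOf_eq] at this
      push_cast at this hk
      linarith
    have := mDm_le_mDp y' (u n)
    rw [hscale.1, hscale.2]
    linarith
  -- existence of a norming functional
  have hy0 : y ≠ 0 := by
    intro h; rw [h, norm_zero] at hynorm; norm_num at hynorm
  obtain ⟨f₀, hf₀norm, hf₀y⟩ := exists_dual_vector ℝ y (norm_ne_zero_iff.2 hy0)
  have hf₀y' : f₀ y = 1 := by rw [hf₀y, hynorm]; norm_num
  refine ⟨y, hynorm, hclose, f₀, ⟨hf₀norm, hf₀y'⟩, ?_⟩
  -- uniqueness
  rintro g ⟨hgnorm, hgy⟩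
  have key : ∀ (f : X →L[ℝ] ℝ), ‖f‖ = 1 → f y = 1 → ∀ n, f (u n) = mDp y (u n) := by
    intro f hfn hfy n
    have hfle : ∀ w, f w ≤ ‖w‖ := by
      intro w
      calc f w ≤ |f w| := le_abs_self _
        _ = ‖f w‖ := (Real.norm_eq_abs _).symm
        _ ≤ ‖f‖ * ‖w‖ := f.le_opNorm w
        _ = ‖w‖ := by rw [hfn, one_mul]
    have hfy' : f y = ‖y‖ := by rw [hfy, hynorm]
    obtain ⟨h1, h2⟩ := support_bounds y (u n) f hfle hfy'
    have h3 := hsmooth n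
    linarith
  have heq : (g : X → ℝ) = (f₀ : X → ℝ) := by
    refine Continuous.ext_on hu g.continuous f₀.continuous ?_
    rintro _ ⟨n, rfl⟩
    rw [key g hgnorm hgy n, key f₀ hf₀norm hf₀y' n]
  exact ContinuousLinearMap.coeFn_injective heq
end
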